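/- arXiv:2502.00724 — 4 statements merged into one kernel-verified Lean document; each statement's English description precedes it below -/
import Mathlib

section
/- Let T and S be square-integrable random vectors in ℝ^d on a common probability space (T the true Bayesian score and S the learned score). Assume F_B = E[T Tᵀ] is positive definite. Let L = E‖S − T‖₂², sRE_B = L/tr(F_B), and d_B = intdim(F_B). If d_B·sRE_B ≤ 0.16, then ‖E[S Sᵀ] − F_B‖₂ / ‖F_B‖₂ ≤ 2.4·√(d_B·sRE_B). -/
/-!
For a square-integrable random vector `X` let `J_X : v ↦ ⟪v, X⟫` be the induced operator into
`L²(μ)`. Then `E[X Xᵀ] = J_X† J_X`, so `‖F_B‖₂ = ‖J_T‖²`, and `‖J_S - J_T‖² = ‖J_{S-T}‖² ≤ L`.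
The identity `J_S† J_S - J_T† J_T = (J_S - J_T)† J_S + J_T† (J_S - J_T)` gives
`‖E[S Sᵀ] - F_B‖₂ ≤ (2 ‖J_T‖ + √L) √L`, i.e. a relative error of at most `2ρ + ρ²` with
`ρ = √(L / ‖F_B‖₂) = √(d_B sRE_B)`; for `ρ ≤ 0.4` this is at most `2.4 ρ`.
-/

open MeasureTheory

/-- Spectral norm (largest singular value) of a real square matrix. -/
noncomputable def specNorm {d : ℕ} (A : Matrix (Fin d) (Fin d) ℝ) : ℝ :=
  ‖LinearMap.toContinuousLinearMap (Matrix.toEuclideanLin A)‖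

/-- Matrix of second moments `E[X Xᵀ]` of a random vector `X`. -/
noncomputable def secondMoment {Ω : Type*} [MeasurableSpace Ω] (μ : Measure Ω) {d : ℕ}
    (X : Ω → EuclideanSpace ℝ (Fin d)) : Matrix (Fin d) (Fin d) ℝ :=
  Matrix.of fun i j => ∫ ω, X ω i * X ω j ∂μ

/-- Intrinsic dimension `tr(A)/‖A‖₂` of a matrix. -/
noncomputable def intdim {d : ℕ} (A : Matrix (Fin d) (Fin d) ℝ) : ℝ :=
  A.trace / specNorm A

open scoped RealInnerProductSpace InnerProduct

theorem ContinuousLinearMap.norm_adjoint_comp_self_sub_le {E F : Type*}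
    [NormedAddCommGroup E] [InnerProductSpace ℝ E] [CompleteSpace E]
    [NormedAddCommGroup F] [InnerProductSpace ℝ F] [CompleteSpace F] (A B : E →L[ℝ] F) :
    ‖B† ∘L B - A† ∘L A‖ ≤ (2 * ‖A‖ + ‖B - A‖) * ‖B - A‖ := by
  have hsplit : B† ∘L B - A† ∘L A = (B - A)† ∘L B + A† ∘L (B - A) := by
    rw [map_sub]; ext1 v; simp
  have hB : ‖B‖ ≤ ‖A‖ + ‖B - A‖ := by simpa using norm_add_le A (B - A)
  calc ‖B† ∘L B - A† ∘L A‖ ≤ ‖B - A‖ * ‖B‖ + ‖A‖ * ‖B - A‖ := by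
        rw [hsplit]
        refine (norm_add_le _ _).trans (add_le_add ?_ ?_) <;>
          refine (opNorm_comp_le _ _).trans_eq ?_ <;>
          rw [LinearIsometryEquiv.norm_map]
    _ ≤ ‖B - A‖ * (‖A‖ + ‖B - A‖) + ‖A‖ * ‖B - A‖ := by gcongr
    _ = (2 * ‖A‖ + ‖B - A‖) * ‖B - A‖ := by ring

namespace MeasureTheory.MemLp

variable {Ω E : Type*} [MeasurableSpace Ω] {μ : Measure Ω}
  [NormedAddCommGroup E] [InnerProductSpace ℝ E] {X Y : Ω → E}

theorem sq_norm_toLp_two (hX : MemLp X 2 μ) : ‖hX.toLp X‖ ^ 2 = ∫ ω, ‖X ω‖ ^ 2 ∂μ := by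
  rw [← real_inner_self_eq_norm_sq, L2.inner_def]
  refine integral_congr_ae ?_
  filter_upwards [hX.coeFn_toLp] with ω hω
  rw [hω, real_inner_self_eq_norm_sq]

noncomputable def innerLp (hX : MemLp X 2 μ) : E →L[ℝ] Lp ℝ 2 μ :=
  LinearMap.mkContinuous
    { toFun := fun v => (hX.const_inner v).toLp
      map_add' := fun v w => by
        rw [← toLp_add]
        exact toLp_congr _ _ (ae_of_all _ fun ω => inner_add_left v w (X ω))
      map_smul' := fun c v => by
        rw [RingHom.id_apply, ← toLp_const_smul]
        exact toLp_congr _ _ (ae_of_all _ fun ω => real_inner_smul_left v (X ω) c) }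
    ‖hX.toLp X‖ fun v => by
      rw [mul_comm]
      refine Lp.norm_le_mul_norm_of_ae_le_mul ?_
      filter_upwards [(hX.const_inner (𝕜 := ℝ) v).coeFn_toLp, hX.coeFn_toLp] with ω h₁ h₂
      simp only [LinearMap.coe_mk, AddHom.coe_mk]
      rw [h₁, h₂]
      exact norm_inner_le_norm v (X ω)

theorem innerLp_apply (hX : MemLp X 2 μ) (v : E) : hX.innerLp v = (hX.const_inner v).toLp :=
  rfl

theorem coeFn_innerLp (hX : MemLp X 2 μ) (v : E) : hX.innerLp v =ᵐ[μ] fun ω => ⟪v, X ω⟫ :=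
  (hX.const_inner v).coeFn_toLp

theorem sq_norm_innerLp_le (hX : MemLp X 2 μ) : ‖hX.innerLp‖ ^ 2 ≤ ∫ ω, ‖X ω‖ ^ 2 ∂μ := by
  rw [← hX.sq_norm_toLp_two]
  gcongr
  exact LinearMap.mkContinuous_norm_le _ (norm_nonneg _) _

theorem inner_innerLp (hX : MemLp X 2 μ) (hY : MemLp Y 2 μ) (v w : E) :
    ⟪hX.innerLp v, hY.innerLp w⟫ = ∫ ω, ⟪v, X ω⟫ * ⟪w, Y ω⟫ ∂μ := by
  rw [L2.inner_def]
  refine integral_congr_ae ?_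
  filter_upwards [hX.coeFn_innerLp v, hY.coeFn_innerLp w] with ω h₁ h₂
  rw [h₁, h₂, real_inner_eq_re_inner, RCLike.inner_apply]
  simp [mul_comm]

theorem innerLp_sub (hX : MemLp X 2 μ) (hY : MemLp Y 2 μ) :
    (hY.sub hX).innerLp = hY.innerLp - hX.innerLp := by
  ext1 v
  rw [sub_apply, innerLp_apply, innerLp_apply, innerLp_apply, ← toLp_sub]
  exact toLp_congr _ _ (ae_of_all _ fun ω => inner_sub_right v (Y ω) (X ω))

end MeasureTheory.MemLp

section SecondMoment

variable {Ω : Type*} [MeasurableSpace Ω] {μ : Measure Ω} {d : ℕ}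
  {X Y : Ω → EuclideanSpace ℝ (Fin d)}

theorem specNorm_eq_norm_toEuclideanCLM (A : Matrix (Fin d) (Fin d) ℝ) :
    specNorm A = ‖Matrix.toEuclideanCLM (𝕜 := ℝ) A‖ :=
  rfl

theorem toEuclideanCLM_secondMoment (hX : MemLp X 2 μ) :
    Matrix.toEuclideanCLM (𝕜 := ℝ) (secondMoment μ X) = hX.innerLp† ∘L hX.innerLp := by
  refine ContinuousLinearMap.coe_injective
    ((EuclideanSpace.basisFun (Fin d) ℝ).toBasis.ext fun j => ?_)
  ext i
  have hcoord (v : EuclideanSpace ℝ (Fin d)) : v i = ⟪EuclideanSpace.single i 1, v⟫ := by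
    simp [EuclideanSpace.inner_single_left]
  simp only [ContinuousLinearMap.coe_coe, OrthonormalBasis.coe_toBasis,
    EuclideanSpace.basisFun_apply]
  rw [hcoord ((_ ∘L _) _), ContinuousLinearMap.comp_apply,
    ContinuousLinearMap.adjoint_inner_right, MemLp.inner_innerLp]
  simp [secondMoment, EuclideanSpace.inner_single_left]

theorem specNorm_secondMoment (hX : MemLp X 2 μ) :
    specNorm (secondMoment μ X) = ‖hX.innerLp‖ ^ 2 := by
  rw [specNorm_eq_norm_toEuclideanCLM, toEuclideanCLM_secondMoment hX,
    ContinuousLinearMap.norm_adjoint_comp_self, sq]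

theorem trace_secondMoment (hX : MemLp X 2 μ) :
    (secondMoment μ X).trace = ∫ ω, ‖X ω‖ ^ 2 ∂μ := by
  have hcoord (i : Fin d) : MemLp (fun ω => X ω i) 2 μ := by
    simpa [EuclideanSpace.inner_single_left] using
      hX.const_inner (𝕜 := ℝ) (EuclideanSpace.single i 1)
  simp_rw [EuclideanSpace.real_norm_sq_eq]
  rw [integral_finsetSum _ fun i _ => (hcoord i).integrable_sq]
  simp [Matrix.trace, secondMoment, sq]

theorem specNorm_secondMoment_le_trace (hX : MemLp X 2 μ) :
    specNorm (secondMoment μ X) ≤ (secondMoment μ X).trace := by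
  rw [specNorm_secondMoment hX, trace_secondMoment hX]
  exact hX.sq_norm_innerLp_le

theorem specNorm_secondMoment_sub_le (hX : MemLp X 2 μ) (hY : MemLp Y 2 μ) :
    specNorm (secondMoment μ Y - secondMoment μ X) ≤
      (2 * ‖hX.innerLp‖ + ‖(hY.sub hX).innerLp‖) * ‖(hY.sub hX).innerLp‖ := by
  rw [specNorm_eq_norm_toEuclideanCLM, map_sub, toEuclideanCLM_secondMoment hX,
    toEuclideanCLM_secondMoment hY, MemLp.innerLp_sub]
  exact ContinuousLinearMap.norm_adjoint_comp_self_sub_le _ _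

end SecondMoment

theorem div_sq_le_mul_sqrt_of_le {a δ e L : ℝ} (ha : 0 < a) (hδ : 0 ≤ δ) (hδL : δ ^ 2 ≤ L)
    (he : e ≤ (2 * a + δ) * δ) (hsmall : L / a ^ 2 ≤ 0.16) :
    e / a ^ 2 ≤ 2.4 * √(L / a ^ 2) := by
  have hδs : δ ≤ √L := Real.le_sqrt_of_sq_le hδL
  have hsa : √L ≤ 0.4 * a := by
    rw [div_le_iff₀ (by positivity)] at hsmall
    exact Real.sqrt_le_iff.mpr ⟨by positivity, by linarith⟩
  rw [Real.sqrt_div' _ (sq_nonneg a), Real.sqrt_sq ha.le, div_le_iff₀ (by positivity)]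
  calc e ≤ (2 * a + √L) * √L := he.trans (by gcongr)
    _ ≤ (2 * a + 0.4 * a) * √L := by gcongr
    _ = 2.4 * (√L / a) * a ^ 2 := by field_simp; ring

theorem lbcrb_approximation_error_posterior_general
    {Ω : Type*} [MeasurableSpace Ω] (μ : Measure Ω)
    {d : ℕ} (T S : Ω → EuclideanSpace ℝ (Fin d))
    (hT : MemLp T 2 μ) (hS : MemLp S 2 μ)
    (FB : Matrix (Fin d) (Fin d) ℝ) (hFB : FB = secondMoment μ T)
    (L sREB dB : ℝ)
    (hL : L = ∫ ω, ‖S ω - T ω‖ ^ 2 ∂μ)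
    (hsRE : sREB = L / FB.trace)
    (hdB : dB = intdim FB)
    (hsmall : dB * sREB ≤ 0.16) :
    specNorm (secondMoment μ S - FB) / specNorm FB ≤ 2.4 * Real.sqrt (dB * sREB) := by
  subst hFB
  have hnorm : specNorm (secondMoment μ T) = ‖hT.innerLp‖ ^ 2 := specNorm_secondMoment hT
  rcases (norm_nonneg hT.innerLp).eq_or_lt with hzero | hpos
  · rw [hnorm, ← hzero, zero_pow two_ne_zero, div_zero]
    positivity
  have htrace : 0 < (secondMoment μ T).trace :=
    (hnorm ▸ pow_pos hpos 2).trans_le (specNorm_secondMoment_le_trace hT)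
  have hratio : dB * sREB = L / ‖hT.innerLp‖ ^ 2 := by
    rw [hdB, hsRE, intdim, hnorm]
    field_simp
  have hdiff : ‖(hS.sub hT).innerLp‖ ^ 2 ≤ L := hL ▸ (hS.sub hT).sq_norm_innerLp_le
  rw [hratio] at hsmall ⊢
  rw [hnorm]
  exact div_sq_le_mul_sqrt_of_le hpos (norm_nonneg _) hdiff
    (specNorm_secondMoment_sub_le hT hS) hsmall

/-- approximation error of the learned Bayesian FIM (Posterior Approach). -/
theorem lbcrb_approximation_error_posterior
    {Ω : Type*} [MeasurableSpace Ω] (μ : Measure Ω) [IsProbabilityMeasure μ]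
    {d : ℕ} (T S : Ω → EuclideanSpace ℝ (Fin d))
    (hT : MemLp T 2 μ) (hS : MemLp S 2 μ)
    (FB : Matrix (Fin d) (Fin d) ℝ) (hFB : FB = secondMoment μ T) (hFBpos : FB.PosDef)
    (L sREB dB : ℝ)
    (hL : L = ∫ ω, ‖S ω - T ω‖ ^ 2 ∂μ)
    (hsRE : sREB = L / FB.trace)
    (hdB : dB = intdim FB)
    (hsmall : dB * sREB ≤ 0.16) :
    specNorm (secondMoment μ S - FB) / specNorm FB ≤ 2.4 * Real.sqrt (dB * sREB) :=
  lbcrb_approximation_error_posterior_general μ T S hT hS FB hFB L sREB dB hL hsRE hdB hsmall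
end

section
/- Let T_M, S_M, T_P, S_P be square-integrable random vectors in ℝ^d on a common probability space, and let K be a positive integer. Set F_M = E[T_M T_Mᵀ], F_P = E[T_P T_Pᵀ], both assumed nonzero positive semidefinite, and F_B = K·F_M + F_P, assumed positive definite. Let L_M = E‖S_M − T_M‖₂², L_P = E‖S_P − T_P‖₂², sRE_M = L_M/tr(F_M), sRE_P = L_P/tr(F_P), d_M = intdim(F_M), and d_P = intdim(F_P). If d_M·sRE_M ≤ 0.16 and d_P·sRE_P ≤ 0.16, then ‖(K·E[S_M S_Mᵀ] + E[S_P S_Pᵀ]) − F_B‖₂ / ‖F_B‖₂ ≤ 2.4·( (‖K·F_M‖₂/‖F_B‖₂)·√(d_M·sRE_M) + (‖F_P‖₂/‖F_B‖₂)·√(d_P·sRE_P) ). -/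
open MeasureTheory
open scoped Matrix.Norms.L2Operator RealInnerProductSpace ENNReal

section Aux
variable {Ω : Type*} [MeasurableSpace Ω] {μ : Measure Ω} [IsProbabilityMeasure μ] {d : ℕ}

lemma specNorm_eq {d : ℕ} (A : Matrix (Fin d) (Fin d) ℝ) : specNorm A = ‖A‖ := rfl

/-- cross second-moment matrix -/
noncomputable def crossMoment (μ : Measure Ω) (f g : Ω → EuclideanSpace ℝ (Fin d)) :
    Matrix (Fin d) (Fin d) ℝ :=
  Matrix.of fun i j => ∫ ω, f ω i * g ω j ∂μ

lemma inner_toEuclideanLin {d : ℕ} (A : Matrix (Fin d) (Fin d) ℝ)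
    (x y : EuclideanSpace ℝ (Fin d)) :
    ⟪Matrix.toEuclideanLin A y, x⟫ = ∑ i, ∑ j, A i j * y j * x i := by
  rw [Matrix.toEuclideanLin_apply]
  simp [PiLp.inner_apply, RCLike.inner_apply, Matrix.mulVec, dotProduct, Finset.sum_mul]
  refine Finset.sum_congr rfl fun i _ => ?_
  rw [Finset.mul_sum]
  exact Finset.sum_congr rfl fun j _ => by ring

lemma specNorm_le_of_inner {d : ℕ} (A : Matrix (Fin d) (Fin d) ℝ) {C : ℝ} (hC : 0 ≤ C)
    (h : ∀ x y : EuclideanSpace ℝ (Fin d), ⟪Matrix.toEuclideanLin A y, x⟫ ≤ C * ‖x‖ * ‖y‖) :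
    specNorm A ≤ C := by
  apply ContinuousLinearMap.opNorm_le_bound _ hC
  intro y
  have hEq : ∀ z : EuclideanSpace ℝ (Fin d),
      ‖(LinearMap.toContinuousLinearMap (Matrix.toEuclideanLin A)) z‖
        = ‖Matrix.toEuclideanLin A z‖ := fun z => rfl
  rw [hEq]
  set v : EuclideanSpace ℝ (Fin d) := Matrix.toEuclideanLin A y with hv
  rcases eq_or_lt_of_le (norm_nonneg v) with h0 | h0
  · rw [← h0]; positivity
  · have h1 := h v y
    rw [real_inner_self_eq_norm_sq] at h1
    nlinarith

lemma my_integrable_mul {f g : Ω → ℝ} (hf : MemLp f 2 μ) (hg : MemLp g 2 μ) :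
    Integrable (fun ω => f ω * g ω) μ := by
  have h : (1 : ℝ≥0∞) / 1 = 1 / 2 + 1 / 2 := by
    rw [ENNReal.div_add_div_same, one_div_one, show (1:ℝ≥0∞)+1 = 2 from one_add_one_eq_two,
      ENNReal.div_self (by norm_num) (by norm_num)]
  have h2 := hf.smul (φ := g) (r := 1) hg
  rw [memLp_one_iff_integrable] at h2
  exact h2.congr (by filter_upwards with ω; simp [mul_comm])

lemma coord_memLp {X : Ω → EuclideanSpace ℝ (Fin d)} (hX : MemLp X 2 μ) (i : Fin d) :
    MemLp (fun ω => X ω i) 2 μ :=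
  (hX.const_inner (𝕜 := ℝ) (EuclideanSpace.single i (1:ℝ))).ae_eq
    (by filter_upwards with ω; simp [EuclideanSpace.inner_single_left])

lemma inner_memLp {X : Ω → EuclideanSpace ℝ (Fin d)} (hX : MemLp X 2 μ)
    (x : EuclideanSpace ℝ (Fin d)) : MemLp (fun ω => ⟪x, X ω⟫) 2 μ :=
  hX.const_inner x

lemma my_cauchy_schwarz {f g : Ω → ℝ} (hf : MemLp f 2 μ) (hg : MemLp g 2 μ) :
    ∫ ω, f ω * g ω ∂μ ≤ Real.sqrt (∫ ω, f ω ^ 2 ∂μ) * Real.sqrt (∫ ω, g ω ^ 2 ∂μ) := by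
  have h2 : Real.HolderConjugate 2 2 := ⟨by norm_num, by norm_num, by norm_num⟩
  have hh := integral_mul_norm_le_Lp_mul_Lq (μ := μ) h2
    (by rw [ENNReal.ofReal_ofNat]; exact hf) (by rw [ENNReal.ofReal_ofNat]; exact hg)
  have h1 : ∫ ω, f ω * g ω ∂μ ≤ ∫ ω, ‖f ω‖ * ‖g ω‖ ∂μ := by
    apply integral_mono (my_integrable_mul hf hg)
      ((my_integrable_mul hf.norm hg.norm).congr (by filter_upwards with ω; simp))
    intro ω
    calc f ω * g ω ≤ |f ω * g ω| := le_abs_self _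
    _ = ‖f ω‖ * ‖g ω‖ := by simp [abs_mul]
  refine h1.trans (hh.trans_eq ?_)
  have e1 : ∀ h : Ω → ℝ, (∫ ω, ‖h ω‖ ^ (2:ℝ) ∂μ) = ∫ ω, h ω ^ 2 ∂μ := by
    intro h; congr 1; funext ω
    rw [show (2:ℝ) = ((2:ℕ):ℝ) by norm_num, Real.rpow_natCast]
    simp [Real.norm_eq_abs, sq_abs]
  rw [e1, e1, Real.sqrt_eq_rpow, Real.sqrt_eq_rpow]

lemma inner_crossMoment {f g : Ω → EuclideanSpace ℝ (Fin d)}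
    (hf : MemLp f 2 μ) (hg : MemLp g 2 μ) (x y : EuclideanSpace ℝ (Fin d)) :
    ⟪Matrix.toEuclideanLin (crossMoment μ f g) y, x⟫
      = ∫ ω, (⟪x, f ω⟫ * ⟪y, g ω⟫) ∂μ := by
  rw [inner_toEuclideanLin]
  have hpt : ∀ ω, (⟪x, f ω⟫ * ⟪y, g ω⟫)
      = ∑ i, ∑ j, (x i * f ω i) * (y j * g ω j) := by
    intro ω
    simp only [PiLp.inner_apply, RCLike.inner_apply, starRingEnd_apply, star_trivial]
    rw [Finset.sum_mul_sum]
    exact Finset.sum_congr rfl fun i _ => Finset.sum_congr rfl fun j _ => by ring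
  have hint : ∀ i j : Fin d, Integrable (fun ω => (x i * f ω i) * (y j * g ω j)) μ :=
    fun i j => my_integrable_mul ((coord_memLp hf i).const_mul (x i))
      ((coord_memLp hg j).const_mul (y j))
  calc ∑ i, ∑ j, crossMoment μ f g i j * y j * x i
      = ∑ i, ∑ j, ∫ ω, (x i * f ω i) * (y j * g ω j) ∂μ := by
        refine Finset.sum_congr rfl fun i _ => Finset.sum_congr rfl fun j _ => ?_
        have : ∀ ω, (x i * f ω i) * (y j * g ω j) = (x i * y j) * (f ω i * g ω j) := by
          intro ω; ring
        simp only [this, integral_const_mul, crossMoment, Matrix.of_apply]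
        ring
    _ = ∫ ω, ∑ i, ∑ j, (x i * f ω i) * (y j * g ω j) ∂μ := by
        rw [integral_finset_sum _ (fun i _ => integrable_finset_sum _ (fun j _ => hint i j))]
        refine Finset.sum_congr rfl fun i _ => ?_
        rw [integral_finset_sum _ (fun j _ => hint i j)]
    _ = ∫ ω, (⟪x, f ω⟫ * ⟪y, g ω⟫) ∂μ := by
        congr 1; funext ω; rw [hpt ω]

lemma crossMoment_specNorm_le {f g : Ω → EuclideanSpace ℝ (Fin d)}
    (hf : MemLp f 2 μ) (hg : MemLp g 2 μ) {a b : ℝ} (ha0 : 0 ≤ a) (hb0 : 0 ≤ b)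
    (ha : ∀ x : EuclideanSpace ℝ (Fin d), ∫ ω, ⟪x, f ω⟫ ^ 2 ∂μ ≤ a * ‖x‖ ^ 2)
    (hb : ∀ y : EuclideanSpace ℝ (Fin d), ∫ ω, ⟪y, g ω⟫ ^ 2 ∂μ ≤ b * ‖y‖ ^ 2) :
    specNorm (crossMoment μ f g) ≤ Real.sqrt a * Real.sqrt b := by
  apply specNorm_le_of_inner _ (by positivity)
  intro x y
  rw [inner_crossMoment hf hg]
  calc ∫ ω, (⟪x, f ω⟫ * ⟪y, g ω⟫) ∂μ
      ≤ Real.sqrt (∫ ω, ⟪x, f ω⟫ ^ 2 ∂μ) * Real.sqrt (∫ ω, ⟪y, g ω⟫ ^ 2 ∂μ) :=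
        my_cauchy_schwarz (inner_memLp hf x) (inner_memLp hg y)
    _ ≤ Real.sqrt (a * ‖x‖ ^ 2) * Real.sqrt (b * ‖y‖ ^ 2) :=
        mul_le_mul (Real.sqrt_le_sqrt (ha x)) (Real.sqrt_le_sqrt (hb y))
          (Real.sqrt_nonneg _) (Real.sqrt_nonneg _)
    _ = Real.sqrt a * Real.sqrt b * ‖x‖ * ‖y‖ := by
        rw [Real.sqrt_mul ha0, Real.sqrt_mul hb0, Real.sqrt_sq (norm_nonneg _),
          Real.sqrt_sq (norm_nonneg _)]
        ring

lemma quad_form_bound {T : Ω → EuclideanSpace ℝ (Fin d)} (hT : MemLp T 2 μ)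
    (y : EuclideanSpace ℝ (Fin d)) :
    ∫ ω, ⟪y, T ω⟫ ^ 2 ∂μ ≤ specNorm (secondMoment μ T) * ‖y‖ ^ 2 := by
  have he : secondMoment μ T = crossMoment μ T T := rfl
  have h1 : ∫ ω, ⟪y, T ω⟫ ^ 2 ∂μ = ⟪Matrix.toEuclideanLin (crossMoment μ T T) y, y⟫ := by
    rw [inner_crossMoment hT hT y y]; congr 1; funext ω; ring
  rw [h1, he]
  calc ⟪Matrix.toEuclideanLin (crossMoment μ T T) y, y⟫
      ≤ ‖Matrix.toEuclideanLin (crossMoment μ T T) y‖ * ‖y‖ := real_inner_le_norm _ _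
    _ ≤ specNorm (crossMoment μ T T) * ‖y‖ * ‖y‖ := by
        apply mul_le_mul_of_nonneg_right _ (norm_nonneg y)
        exact (LinearMap.toContinuousLinearMap
          (Matrix.toEuclideanLin (crossMoment μ T T))).le_opNorm y
    _ = specNorm (crossMoment μ T T) * ‖y‖ ^ 2 := by ring

lemma delta_form_bound {D : Ω → EuclideanSpace ℝ (Fin d)} (hD : MemLp D 2 μ)
    (x : EuclideanSpace ℝ (Fin d)) :
    ∫ ω, ⟪x, D ω⟫ ^ 2 ∂μ ≤ (∫ ω, ‖D ω‖ ^ 2 ∂μ) * ‖x‖ ^ 2 := by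
  have h1 : Integrable (fun ω => ⟪x, D ω⟫ ^ 2) μ := by
    have := my_integrable_mul (inner_memLp hD x) (inner_memLp hD x)
    exact this.congr (by filter_upwards with ω; ring)
  have h2 : Integrable (fun ω => ‖x‖ ^ 2 * ‖D ω‖ ^ 2) μ := by
    have : Integrable (fun ω => ‖D ω‖ ^ 2) μ := hD.norm.integrable_sq
    exact this.const_mul _
  calc ∫ ω, ⟪x, D ω⟫ ^ 2 ∂μ ≤ ∫ ω, ‖x‖ ^ 2 * ‖D ω‖ ^ 2 ∂μ := by
        apply integral_mono h1 h2
        intro ω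
        have := abs_real_inner_le_norm x (D ω)
        calc ⟪x, D ω⟫ ^ 2 = |⟪x, D ω⟫| ^ 2 := (sq_abs _).symm
          _ ≤ (‖x‖ * ‖D ω‖) ^ 2 := by
              apply pow_le_pow_left₀ (abs_nonneg _) this
          _ = ‖x‖ ^ 2 * ‖D ω‖ ^ 2 := by ring
    _ = (∫ ω, ‖D ω‖ ^ 2 ∂μ) * ‖x‖ ^ 2 := by rw [integral_const_mul]; ring

lemma secondMoment_decomp {S T : Ω → EuclideanSpace ℝ (Fin d)}
    (hT : MemLp T 2 μ) (hS : MemLp S 2 μ) :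
    secondMoment μ S - secondMoment μ T
      = crossMoment μ (S - T) T + crossMoment μ T (S - T) + crossMoment μ (S - T) (S - T) := by
  have hD : MemLp (S - T) 2 μ := hS.sub hT
  ext i j
  have hint : ∀ (f g : Ω → EuclideanSpace ℝ (Fin d)), MemLp f 2 μ → MemLp g 2 μ →
      Integrable (fun ω => f ω i * g ω j) μ := fun f g hf hg =>
    my_integrable_mul (coord_memLp hf i) (coord_memLp hg j)
  simp only [Matrix.sub_apply, Matrix.add_apply, secondMoment, crossMoment, Matrix.of_apply]
  have h12 : Integrable (fun ω => (S - T) ω i * T ω j + T ω i * (S - T) ω j) μ := by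
    exact (hint _ _ hD hT).add (hint _ _ hT hD)
  rw [← integral_sub (hint S S hS hS) (hint T T hT hT),
    ← integral_add (hint _ _ hD hT) (hint _ _ hT hD),
    ← integral_add h12 (hint _ _ hD hD)]
  congr 1; funext ω
  have : (S - T) ω = S ω - T ω := rfl
  simp only [this, PiLp.sub_apply]
  ring

end Aux

section Main
variable {Ω : Type*} [MeasurableSpace Ω] {μ : Measure Ω} [IsProbabilityMeasure μ] {d : ℕ}

lemma trace_secondMoment_s2 {T : Ω → EuclideanSpace ℝ (Fin d)} (hT : MemLp T 2 μ) :
    (secondMoment μ T).trace = ∫ ω, ‖T ω‖ ^ 2 ∂μ := by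
  have hi : ∀ i : Fin d, Integrable (fun ω => T ω i * T ω i) μ := fun i =>
    my_integrable_mul (coord_memLp hT i) (coord_memLp hT i)
  calc (secondMoment μ T).trace = ∑ i, ∫ ω, T ω i * T ω i ∂μ := rfl
    _ = ∫ ω, ∑ i, T ω i * T ω i ∂μ := (integral_finset_sum _ (fun i _ => hi i)).symm
    _ = ∫ ω, ‖T ω‖ ^ 2 ∂μ := by
        congr 1; funext ω
        rw [EuclideanSpace.norm_eq, Real.sq_sqrt (by positivity)]
        refine Finset.sum_congr rfl fun i _ => ?_
        simp [Real.norm_eq_abs, sq_abs, sq]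

lemma trace_secondMoment_pos {T : Ω → EuclideanSpace ℝ (Fin d)} (hT : MemLp T 2 μ)
    (hne : secondMoment μ T ≠ 0) : 0 < (secondMoment μ T).trace := by
  have hi : ∀ i : Fin d, Integrable (fun ω => T ω i * T ω i) μ := fun i =>
    my_integrable_mul (coord_memLp hT i) (coord_memLp hT i)
  have htr : (secondMoment μ T).trace = ∑ i, ∫ ω, T ω i * T ω i ∂μ := rfl
  have hnn : ∀ i : Fin d, 0 ≤ ∫ ω, T ω i * T ω i ∂μ := fun i =>
    integral_nonneg (fun ω => mul_self_nonneg _)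
  have h0 : 0 ≤ (secondMoment μ T).trace := htr ▸ Finset.sum_nonneg (fun i _ => hnn i)
  rcases h0.lt_or_eq with h | h
  · exact h
  · exfalso; apply hne
    have hdiag : ∀ i : Fin d, ∫ ω, T ω i * T ω i ∂μ = 0 := by
      have hsum : ∑ i, ∫ ω, T ω i * T ω i ∂μ = 0 := by rw [← htr, ← h]
      intro i
      exact (Finset.sum_eq_zero_iff_of_nonneg (fun i _ => hnn i)).mp hsum i (Finset.mem_univ i)
    have hdiag2 : ∀ i : Fin d, ∫ ω, T ω i ^ 2 ∂μ = 0 := by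
      intro i; rw [show (fun ω => T ω i ^ 2) = fun ω => T ω i * T ω i by funext ω; ring]
      exact hdiag i
    ext i j
    have hub := my_cauchy_schwarz (coord_memLp hT i) (coord_memLp hT j)
    have hlb := my_cauchy_schwarz (coord_memLp hT i).neg (coord_memLp hT j)
    rw [hdiag2 i, hdiag2 j, Real.sqrt_zero, zero_mul] at hub
    have e1 : ∫ ω, -T ω i * T ω j ∂μ = -∫ ω, T ω i * T ω j ∂μ := by
      rw [← integral_neg]; congr 1; funext ω; ring
    have e2 : (∫ ω, (-T ω i) ^ 2 ∂μ) = ∫ ω, T ω i ^ 2 ∂μ := by congr 1; funext ω; ring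
    simp only [Pi.neg_apply] at hlb
    simp only [e1, e2] at hlb
    rw [hdiag2 i, hdiag2 j, Real.sqrt_zero, zero_mul] at hlb
    have : ∫ ω, T ω i * T ω j ∂μ = 0 := le_antisymm hub (by linarith)
    simp only [secondMoment, Matrix.of_apply, Matrix.zero_apply]
    exact this

lemma specNorm_pos {A : Matrix (Fin d) (Fin d) ℝ} (h : A ≠ 0) : 0 < specNorm A := by
  rw [specNorm_eq]; exact norm_pos_iff.mpr h

lemma term_bound {S T : Ω → EuclideanSpace ℝ (Fin d)} (hT : MemLp T 2 μ) (hS : MemLp S 2 μ)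
    (hne : secondMoment μ T ≠ 0)
    (hsmall : (∫ ω, ‖(S - T) ω‖ ^ 2 ∂μ) / specNorm (secondMoment μ T) ≤ 0.16) :
    specNorm (secondMoment μ S - secondMoment μ T)
      ≤ 2.4 * specNorm (secondMoment μ T) *
        Real.sqrt ((∫ ω, ‖(S - T) ω‖ ^ 2 ∂μ) / specNorm (secondMoment μ T)) := by
  have hD : MemLp (S - T) 2 μ := hS.sub hT
  set N := specNorm (secondMoment μ T) with hNdef
  set L := ∫ ω, ‖(S - T) ω‖ ^ 2 ∂μ with hLdef
  have hN : 0 < N := specNorm_pos hne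
  have hL0 : 0 ≤ L := integral_nonneg (fun ω => by positivity)
  have hdb : ∀ x : EuclideanSpace ℝ (Fin d), ∫ ω, ⟪x, (S - T) ω⟫ ^ 2 ∂μ ≤ L * ‖x‖ ^ 2 :=
    fun x => delta_form_bound hD x
  have c1 : specNorm (crossMoment μ (S - T) T) ≤ Real.sqrt L * Real.sqrt N :=
    crossMoment_specNorm_le hD hT hL0 hN.le hdb (quad_form_bound hT)
  have c2 : specNorm (crossMoment μ T (S - T)) ≤ Real.sqrt N * Real.sqrt L :=
    crossMoment_specNorm_le hT hD hN.le hL0 (quad_form_bound hT) hdb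
  have c3 : specNorm (crossMoment μ (S - T) (S - T)) ≤ Real.sqrt L * Real.sqrt L :=
    crossMoment_specNorm_le hD hD hL0 hL0 hdb hdb
  have hdecomp := secondMoment_decomp hT hS (μ := μ)
  have htri : specNorm (secondMoment μ S - secondMoment μ T)
      ≤ specNorm (crossMoment μ (S - T) T) + specNorm (crossMoment μ T (S - T))
        + specNorm (crossMoment μ (S - T) (S - T)) := by
    rw [hdecomp]
    simp only [specNorm_eq]
    exact (norm_add_le _ _).trans (by gcongr; exact norm_add_le _ _)
  set s := Real.sqrt (L / N) with hsdef
  have hs0 : 0 ≤ s := Real.sqrt_nonneg _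
  have hs2 : s ^ 2 = L / N := Real.sq_sqrt (div_nonneg hL0 hN.le)
  have hs04 : s ≤ 0.4 := by
    have h1 := Real.sqrt_le_sqrt hsmall
    rwa [show Real.sqrt 0.16 = 0.4 by
      rw [show (0.16:ℝ) = 0.4 ^ 2 by norm_num, Real.sqrt_sq (by norm_num)]] at h1
  have hLs : L = s ^ 2 * N := by rw [hs2]; field_simp
  have hsqrtL : Real.sqrt L = s * Real.sqrt N := by
    rw [hLs, Real.sqrt_mul (by positivity), Real.sqrt_sq hs0]
  have hNN : Real.sqrt N * Real.sqrt N = N := Real.mul_self_sqrt hN.le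
  have key : Real.sqrt L * Real.sqrt N = s * N := by
    rw [hsqrtL, mul_assoc, hNN]
  have key3 : Real.sqrt L * Real.sqrt L = s ^ 2 * N := by
    rw [hsqrtL, show s * Real.sqrt N * (s * Real.sqrt N)
      = s ^ 2 * (Real.sqrt N * Real.sqrt N) by ring, hNN]
  calc specNorm (secondMoment μ S - secondMoment μ T)
      ≤ Real.sqrt L * Real.sqrt N + Real.sqrt N * Real.sqrt L + Real.sqrt L * Real.sqrt L :=
        htri.trans (by linarith)
    _ = 2 * (s * N) + s ^ 2 * N := by
        rw [mul_comm (Real.sqrt N) (Real.sqrt L), key, key3]; ring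
    _ ≤ 2.4 * N * s := by
        nlinarith [mul_nonneg (mul_nonneg hs0 hN.le) (sub_nonneg.mpr hs04)]
end Main

/-- approximation error of the learned Bayesian FIM
(Measurement-Prior Approach). -/
theorem lbcrb_approximation_error_measurement_prior
    {Ω : Type*} [MeasurableSpace Ω] (μ : Measure Ω) [IsProbabilityMeasure μ]
    {d : ℕ} (TM SM TP SP : Ω → EuclideanSpace ℝ (Fin d))
    (hTM : MemLp TM 2 μ) (hSM : MemLp SM 2 μ)
    (hTP : MemLp TP 2 μ) (hSP : MemLp SP 2 μ)
    (K : ℕ) (hK : 0 < K)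
    (FM FP FB : Matrix (Fin d) (Fin d) ℝ)
    (hFM : FM = secondMoment μ TM) (hFP : FP = secondMoment μ TP)
    (hFMne : FM ≠ 0) (hFPne : FP ≠ 0)
    (hFMpsd : FM.PosSemidef) (hFPpsd : FP.PosSemidef)
    (hFB : FB = (K : ℝ) • FM + FP) (hFBpos : FB.PosDef)
    (LM LP sREM sREP dM dP : ℝ)
    (hLM : LM = ∫ ω, ‖SM ω - TM ω‖ ^ 2 ∂μ)
    (hLP : LP = ∫ ω, ‖SP ω - TP ω‖ ^ 2 ∂μ)
    (hsREM : sREM = LM / FM.trace) (hsREP : sREP = LP / FP.trace)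
    (hdM : dM = intdim FM) (hdP : dP = intdim FP)
    (hsmallM : dM * sREM ≤ 0.16) (hsmallP : dP * sREP ≤ 0.16) :
    specNorm (((K : ℝ) • secondMoment μ SM + secondMoment μ SP) - FB) / specNorm FB
      ≤ 2.4 * ((specNorm ((K : ℝ) • FM) / specNorm FB) * Real.sqrt (dM * sREM)
          + (specNorm FP / specNorm FB) * Real.sqrt (dP * sREP)) := by
  subst hFB hFM hFP hsREM hsREP hdM hdP
  set FMm := secondMoment μ TM with hFMm
  set FPm := secondMoment μ TP with hFPm
  have hNM : 0 < specNorm FMm := specNorm_pos hFMne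
  have hNP : 0 < specNorm FPm := specNorm_pos hFPne
  have htrM : 0 < FMm.trace := trace_secondMoment_pos hTM hFMne
  have htrP : 0 < FPm.trace := trace_secondMoment_pos hTP hFPne
  -- the products dM * sREM rewritten
  have hxM : intdim FMm * (LM / FMm.trace) = LM / specNorm FMm := by
    rw [intdim]; field_simp
  have hxP : intdim FPm * (LP / FPm.trace) = LP / specNorm FPm := by
    rw [intdim]; field_simp
  -- LM, LP agree with the term_bound forms
  have hLM' : (∫ ω, ‖(SM - TM) ω‖ ^ 2 ∂μ) = LM := hLM.symm
  have hLP' : (∫ ω, ‖(SP - TP) ω‖ ^ 2 ∂μ) = LP := hLP.symm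
  have tbM : specNorm (secondMoment μ SM - FMm)
      ≤ 2.4 * specNorm FMm * Real.sqrt (LM / specNorm FMm) := by
    have := term_bound hTM hSM hFMne (by rw [hLM']; rw [hxM] at hsmallM; exact hsmallM)
    rwa [hLM'] at this
  have tbP : specNorm (secondMoment μ SP - FPm)
      ≤ 2.4 * specNorm FPm * Real.sqrt (LP / specNorm FPm) := by
    have := term_bound hTP hSP hFPne (by rw [hLP']; rw [hxP] at hsmallP; exact hsmallP)
    rwa [hLP'] at this
  -- FB nonzero
  have htrB : (0:ℝ) < ((K : ℝ) • FMm + FPm).trace := by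
    rw [Matrix.trace_add, Matrix.trace_smul]
    have hK1 : (1:ℝ) ≤ (K:ℝ) := by exact_mod_cast hK
    have : FMm.trace ≤ (K:ℝ) • FMm.trace := by
      rw [smul_eq_mul]; nlinarith
    linarith [this]
  have hFBne : (K : ℝ) • FMm + FPm ≠ 0 := by
    intro h; rw [h] at htrB; simp at htrB
  have hNB : 0 < specNorm ((K : ℝ) • FMm + FPm) := specNorm_pos hFBne
  -- error decomposition
  have herr : ((K : ℝ) • secondMoment μ SM + secondMoment μ SP) - ((K : ℝ) • FMm + FPm)
      = (K : ℝ) • (secondMoment μ SM - FMm) + (secondMoment μ SP - FPm) := by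
    module
  have hKnorm : ∀ A : Matrix (Fin d) (Fin d) ℝ, specNorm ((K:ℝ) • A) = (K:ℝ) * specNorm A := by
    intro A
    simp only [specNorm_eq]
    rw [norm_smul, Real.norm_natCast]
  have h1 : specNorm (((K : ℝ) • secondMoment μ SM + secondMoment μ SP)
        - ((K : ℝ) • FMm + FPm))
      ≤ (K:ℝ) * specNorm (secondMoment μ SM - FMm) + specNorm (secondMoment μ SP - FPm) := by
    rw [herr, ← hKnorm]
    simp only [specNorm_eq]
    exact norm_add_le _ _
  have hmain : specNorm (((K : ℝ) • secondMoment μ SM + secondMoment μ SP)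
        - ((K : ℝ) • FMm + FPm))
      ≤ 2.4 * (((K:ℝ) * specNorm FMm) * Real.sqrt (LM / specNorm FMm)
          + specNorm FPm * Real.sqrt (LP / specNorm FPm)) := by
    have hK0 : (0:ℝ) ≤ K := Nat.cast_nonneg K
    nlinarith [mul_le_mul_of_nonneg_left tbM hK0, tbP]
  rw [hxM, hxP, hKnorm FMm]
  have hrhs : 2.4 * (((K:ℝ) * specNorm FMm / specNorm ((K : ℝ) • FMm + FPm))
        * Real.sqrt (LM / specNorm FMm)
      + (specNorm FPm / specNorm ((K : ℝ) • FMm + FPm)) * Real.sqrt (LP / specNorm FPm))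
      = (2.4 * (((K:ℝ) * specNorm FMm) * Real.sqrt (LM / specNorm FMm)
          + specNorm FPm * Real.sqrt (LP / specNorm FPm))) / specNorm ((K : ℝ) • FMm + FPm) := by
    rw [div_mul_eq_mul_div, div_mul_eq_mul_div, ← add_div, ← mul_div_assoc]
  rw [hrhs]
  exact (div_le_div_iff_of_pos_right hNB).mpr hmain
end

section
/- Let Θ be an ℝ^d-valued random vector with positive density p(θ) on ℝ^d, and given Θ = θ let X₁,…,X_M be conditionally i.i.d. with positive conditional density p(x|θ), all densities differentiable in θ. Assume all scores are square-integrable and that the conditional mean of the Fisher score vanishes: E[∇_θ log p(X_i|Θ) | Θ] = 0 almost surely for every i (so that, by Bayes' rule, the posterior score satisfies ∇_θ log p(θ | x₁,…,x_M) = ∇_θ log p(θ) + Σ_{i=1}^M ∇_θ log p(x_i|θ)). Then E‖∇_θ log p(Θ | X₁,…,X_M)‖₂² ≥ E‖∇_θ log p(Θ)‖₂² + M·E[ ‖(1/M)·Σ_{i=1}^M ∇_θ log p(X_i|Θ)·∇_θ log p(X_i|Θ)ᵀ‖₂ ]. -/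
set_option synthInstance.maxHeartbeats 400000
set_option maxHeartbeats 1000000


open MeasureTheory Filter
open scoped NNReal ENNReal RealInnerProductSpace

/-- Outer product `v vᵀ` of a vector with itself. -/
def outer {d : ℕ} (v : EuclideanSpace ℝ (Fin d)) : Matrix (Fin d) (Fin d) ℝ :=
  Matrix.of fun i j => v i * v j

namespace Aux

noncomputable def mCLM {d : ℕ} : Matrix (Fin d) (Fin d) ℝ →ₗ[ℝ]
    (EuclideanSpace ℝ (Fin d) →L[ℝ] EuclideanSpace ℝ (Fin d)) :=
  (LinearMap.toContinuousLinearMap :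
      (EuclideanSpace ℝ (Fin d) →ₗ[ℝ] EuclideanSpace ℝ (Fin d)) ≃ₗ[ℝ] _).toLinearMap.comp
    (Matrix.toEuclideanLin :
      Matrix (Fin d) (Fin d) ℝ ≃ₗ[ℝ] (EuclideanSpace ℝ (Fin d) →ₗ[ℝ] _)).toLinearMap

lemma specNorm_eq {d : ℕ} (A : Matrix (Fin d) (Fin d) ℝ) : specNorm A = ‖mCLM A‖ := rfl

lemma mCLM_apply {d : ℕ} (A : Matrix (Fin d) (Fin d) ℝ) (w : EuclideanSpace ℝ (Fin d)) :
    mCLM A w = Matrix.toEuclideanLin A w := rfl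

lemma specNorm_outer_le {d : ℕ} (v : EuclideanSpace ℝ (Fin d)) :
    specNorm (outer v) ≤ ‖v‖ ^ 2 := by
  rw [specNorm_eq]
  apply ContinuousLinearMap.opNorm_le_bound _ (sq_nonneg _)
  intro w
  have hval : mCLM (outer v) w = (inner ℝ v w : ℝ) • v := by
    rw [mCLM_apply]
    apply PiLp.ext
    intro i
    rw [Matrix.toEuclideanLin_apply]
    have : ((inner ℝ v w : ℝ) • v) i = (inner ℝ v w : ℝ) * v i := rfl
    rw [this]
    show (outer v).mulVec _ i = _
    simp only [Matrix.mulVec, dotProduct, outer, Matrix.of_apply]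
    rw [PiLp.inner_apply]
    simp only [RCLike.inner_apply, starRingEnd_apply, star_trivial]
    rw [Finset.sum_mul]
    congr 1
    ext j
    ring
  rw [hval, norm_smul]
  have := abs_real_inner_le_norm v w
  have h2 : ‖(inner ℝ v w : ℝ)‖ ≤ ‖v‖ * ‖w‖ := by rwa [Real.norm_eq_abs]
  calc ‖(inner ℝ v w : ℝ)‖ * ‖v‖ ≤ (‖v‖ * ‖w‖) * ‖v‖ := by
        apply mul_le_mul_of_nonneg_right h2 (norm_nonneg _)
    _ = ‖v‖ ^ 2 * ‖w‖ := by ring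

lemma spec_bound {d M : ℕ} (hM : 0 < M) (f : Fin M → EuclideanSpace ℝ (Fin d)) :
    (M : ℝ) * specNorm ((M : ℝ)⁻¹ • ∑ i, outer (f i)) ≤ ∑ i, ‖f i‖ ^ 2 := by
  have hMpos : (0 : ℝ) < M := Nat.cast_pos.2 hM
  have h1 : specNorm ((M : ℝ)⁻¹ • ∑ i, outer (f i))
      = (M : ℝ)⁻¹ * specNorm (∑ i, outer (f i)) := by
    rw [specNorm_eq, specNorm_eq, _root_.map_smul]
    rw [norm_smul ((M : ℝ)⁻¹) (Aux.mCLM (∑ i, outer (f i))), Real.norm_eq_abs,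
      abs_of_nonneg (by positivity)]
  have h2 : specNorm (∑ i, outer (f i)) ≤ ∑ i, specNorm (outer (f i)) := by
    rw [specNorm_eq, map_sum]
    refine (norm_sum_le _ _).trans_eq ?_
    simp [specNorm_eq]
  calc (M : ℝ) * specNorm ((M : ℝ)⁻¹ • ∑ i, outer (f i))
      = specNorm (∑ i, outer (f i)) := by rw [h1]; field_simp
    _ ≤ ∑ i, specNorm (outer (f i)) := h2
    _ ≤ ∑ i, ‖f i‖ ^ 2 := Finset.sum_le_sum fun i _ => specNorm_outer_le (f i)

lemma specNorm_continuous {d : ℕ} : Continuous (specNorm (d := d)) := by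
  have : Continuous (mCLM (d := d)) := mCLM.continuous_of_finiteDimensional
  exact continuous_norm.comp this


lemma gradient_add_sum {d n : ℕ} (g : EuclideanSpace ℝ (Fin d) → ℝ)
    (h : Fin n → EuclideanSpace ℝ (Fin d) → ℝ) (θ : EuclideanSpace ℝ (Fin d))
    (hg : DifferentiableAt ℝ g θ) (hh : ∀ i, DifferentiableAt ℝ (h i) θ) :
    gradient (fun θ' => g θ' + ∑ i, h i θ') θ = gradient g θ + ∑ i, gradient (h i) θ := by
  unfold gradient
  rw [fderiv_fun_add hg (DifferentiableAt.fun_sum fun i _ => hh i),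
    fderiv_fun_sum fun i _ => hh i, map_add, map_sum]

lemma measurable_gradient_param {α : Type*} [MeasurableSpace α] {d : ℕ}
    (f : α → EuclideanSpace ℝ (Fin d) → ℝ)
    (hf : Measurable fun p : α × EuclideanSpace ℝ (Fin d) => f p.1 p.2)
    (hdiff : ∀ x θ, DifferentiableAt ℝ (f x) θ) :
    Measurable fun p : α × EuclideanSpace ℝ (Fin d) => gradient (f p.1) p.2 := by
  set v : Fin d → EuclideanSpace ℝ (Fin d) := fun k => EuclideanSpace.single k (1:ℝ) with hv
  have hcoord : ∀ (x : α) (θ : EuclideanSpace ℝ (Fin d)) (k : Fin d),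
      gradient (f x) θ k = fderiv ℝ (f x) θ (v k) := by
    intro x θ k
    have h1 : (inner ℝ (gradient (f x) θ) (v k) : ℝ) = fderiv ℝ (f x) θ (v k) :=
      InnerProductSpace.toDual_symm_apply
    rw [← h1, hv, EuclideanSpace.inner_single_right]
    simp
  have hseq : Tendsto (fun n : ℕ => ((n:ℝ)+1)⁻¹) atTop (nhdsWithin 0 {(0:ℝ)}ᶜ) := by
    refine tendsto_nhdsWithin_of_tendsto_nhds_of_eventually_within _ ?_ ?_
    · have h1 : Tendsto (fun n : ℕ => ((n:ℝ)+1)) atTop atTop :=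
        tendsto_atTop_add_const_right atTop 1 tendsto_natCast_atTop_atTop
      exact tendsto_inv_atTop_zero.comp h1
    · refine Eventually.of_forall fun n => ?_
      simp only [Set.mem_compl_iff, Set.mem_singleton_iff]
      positivity
  have hlim : ∀ (x : α) (θ : EuclideanSpace ℝ (Fin d)) (k : Fin d),
      Tendsto (fun n : ℕ => (f x (θ + ((n:ℝ)+1)⁻¹ • v k) - f x θ) / ((n:ℝ)+1)⁻¹) atTop
        (nhds (fderiv ℝ (f x) θ (v k))) := by
    intro x θ k
    have hline : HasDerivAt (fun t : ℝ => θ + t • v k) (v k) 0 := by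
      simpa using ((hasDerivAt_id (0:ℝ)).smul_const (v k)).const_add θ
    have hF : HasDerivAt (fun t : ℝ => f x (θ + t • v k)) (fderiv ℝ (f x) θ (v k)) 0 := by
      have h0 : HasFDerivAt (f x) (fderiv ℝ (f x) θ) ((fun t : ℝ => θ + t • v k) 0) := by
        simpa using (hdiff x θ).hasFDerivAt
      exact h0.comp_hasDerivAt 0 hline
    have hslope := hasDerivAt_iff_tendsto_slope.1 hF
    have htot := hslope.comp hseq
    refine htot.congr fun n => ?_
    rw [Function.comp_apply, slope_def_field]
    norm_num
  have hck : ∀ k : Fin d, Measurable (fun p : α × EuclideanSpace ℝ (Fin d) =>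
      gradient (f p.1) p.2 k) := by
    intro k
    have happrox : ∀ n : ℕ, Measurable (fun p : α × EuclideanSpace ℝ (Fin d) =>
        (f p.1 (p.2 + ((n:ℝ)+1)⁻¹ • v k) - f p.1 p.2) / ((n:ℝ)+1)⁻¹) := by
      intro n
      apply Measurable.div_const
      exact (hf.comp (measurable_fst.prodMk (measurable_snd.add_const _))).sub hf
    apply measurable_of_tendsto_metrizable happrox
    rw [tendsto_pi_nhds]
    intro p
    rw [hcoord]
    exact hlim p.1 p.2 k
  have hE : Measurable (fun p : α × EuclideanSpace ℝ (Fin d) =>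
      (MeasurableEquiv.toLp 2 (Fin d → ℝ)).symm (gradient (f p.1) p.2)) :=
    measurable_pi_iff.2 fun k => hck k
  have := (MeasurableEquiv.toLp 2 (Fin d → ℝ)).symm.symm.measurable.comp hE
  exact this


end Aux

/-- the expected squared norm of the posterior score dominates the
prior-score contribution plus `M` times the expected spectral norm of the averaged
outer product of the per-sample Fisher scores. -/
theorem posterior_score_norm_inequality
    {dθ dx M : ℕ} (hM : 0 < M)
    -- prior density `p(θ)` and conditional density `p(x|θ)`, positive and
    -- differentiable in θ
    (pθ : EuclideanSpace ℝ (Fin dθ) → ℝ)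
    (pc : EuclideanSpace ℝ (Fin dx) → EuclideanSpace ℝ (Fin dθ) → ℝ)
    (hpθ_pos : ∀ θ, 0 < pθ θ) (hpc_pos : ∀ x θ, 0 < pc x θ)
    (hpθ_meas : Measurable fun θ => pθ θ)
    (hpc_meas : Measurable fun z : EuclideanSpace ℝ (Fin dx) ×
      EuclideanSpace ℝ (Fin dθ) => pc z.1 z.2)
    (hpθ_diff : ∀ θ, DifferentiableAt ℝ pθ θ)
    (hpc_diff : ∀ x θ, DifferentiableAt ℝ (fun θ' => pc x θ') θ)
    (hpθ_prob : IsProbabilityMeasure (volume.withDensity fun θ => ENNReal.ofReal (pθ θ)))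
    (hpc_prob : ∀ θ, IsProbabilityMeasure
      (volume.withDensity fun x => ENNReal.ofReal (pc x θ)))
    -- the joint law `μ` of `(Θ, X₁, …, X_M)`, with the `Xᵢ` conditionally i.i.d.
    (μ : Measure (EuclideanSpace ℝ (Fin dθ) × (Fin M → EuclideanSpace ℝ (Fin dx))))
    (hμ : μ = volume.withDensity fun z => ENNReal.ofReal (pθ z.1 * ∏ i, pc (z.2 i) z.1))
    -- prior, Fisher, and posterior scores
    (priorScore : EuclideanSpace ℝ (Fin dθ) → EuclideanSpace ℝ (Fin dθ))
    (hprior : priorScore = fun θ => gradient (fun θ' => Real.log (pθ θ')) θ)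
    (fisherScore : EuclideanSpace ℝ (Fin dx) → EuclideanSpace ℝ (Fin dθ) →
      EuclideanSpace ℝ (Fin dθ))
    (hfisher : fisherScore = fun x θ => gradient (fun θ' => Real.log (pc x θ')) θ)
    (postScore : EuclideanSpace ℝ (Fin dθ) → (Fin M → EuclideanSpace ℝ (Fin dx)) →
      EuclideanSpace ℝ (Fin dθ))
    (hpost : postScore = fun θ xs =>
      gradient (fun θ' => Real.log (pθ θ' * ∏ i, pc (xs i) θ')) θ)
    -- all scores are square-integrable
    (hInt_post : Integrable (fun z => ‖postScore z.1 z.2‖ ^ 2) μ)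
    (hInt_prior : Integrable (fun z => ‖priorScore z.1‖ ^ 2) μ)
    (hInt_fisher : ∀ i, Integrable (fun z => ‖fisherScore (z.2 i) z.1‖ ^ 2) μ)
    -- the conditional mean of the Fisher score vanishes
    (hmean0 : ∀ᵐ θ ∂(volume : Measure (EuclideanSpace ℝ (Fin dθ))),
      (∫ x, pc x θ • fisherScore x θ) = 0) :
    ∫ z, ‖postScore z.1 z.2‖ ^ 2 ∂μ
      ≥ (∫ z, ‖priorScore z.1‖ ^ 2 ∂μ)
        + (M : ℝ) * ∫ z, specNorm ((M : ℝ)⁻¹ • ∑ i, outer (fisherScore (z.2 i) z.1)) ∂μ := by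
  obtain ⟨m, rfl⟩ : ∃ m, M = m + 1 := ⟨M - 1, (Nat.succ_pred_eq_of_pos hM).symm⟩
  -- score measurability
  have hfish_meas : Measurable fun p : EuclideanSpace ℝ (Fin dx) × EuclideanSpace ℝ (Fin dθ) =>
      fisherScore p.1 p.2 := by
    rw [hfisher]
    exact Aux.measurable_gradient_param _ (Real.measurable_log.comp hpc_meas)
      (fun x θ => (hpc_diff x θ).log (hpc_pos x θ).ne')
  have hprior_meas : Measurable priorScore := by
    rw [hprior]
    have := Aux.measurable_gradient_param (α := Unit) (fun _ θ' => Real.log (pθ θ'))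
      ((Real.measurable_log.comp hpθ_meas).comp measurable_snd)
      (fun _ θ => (hpθ_diff θ).log (hpθ_pos θ).ne')
    exact this.comp ((measurable_const : Measurable fun _ : EuclideanSpace ℝ (Fin dθ) => ()).prodMk measurable_id)
  have hfe_meas : ∀ i : Fin (m+1), Measurable fun z :
      EuclideanSpace ℝ (Fin dθ) × (Fin (m+1) → EuclideanSpace ℝ (Fin dx)) =>
      fisherScore (z.2 i) z.1 := by
    intro i
    exact hfish_meas.comp (Measurable.prodMk ((measurable_pi_apply i).comp measurable_snd)
      measurable_fst)
  -- decomposition of the posterior score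
  have hdecomp : ∀ θ xs, postScore θ xs = priorScore θ + ∑ i, fisherScore (xs i) θ := by
    intro θ xs
    rw [hpost, hprior, hfisher]
    show gradient (fun θ' => Real.log (pθ θ' * ∏ i, pc (xs i) θ')) θ
      = gradient (fun θ' => Real.log (pθ θ')) θ
        + ∑ i, gradient (fun θ' => Real.log (pc (xs i) θ')) θ
    have hfun : (fun θ' => Real.log (pθ θ' * ∏ i, pc (xs i) θ'))
        = fun θ' => Real.log (pθ θ') + ∑ i, Real.log (pc (xs i) θ') := by
      funext θ'
      rw [Real.log_mul (hpθ_pos θ').ne' (Finset.prod_pos fun i _ => hpc_pos _ _).ne',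
        Real.log_prod fun i _ => (hpc_pos _ _).ne']
    rw [hfun]
    exact Aux.gradient_add_sum _ _ _ ((hpθ_diff θ).log (hpθ_pos θ).ne')
      (fun i => (hpc_diff (xs i) θ).log (hpc_pos _ _).ne')
  -- conditional density facts
  have hq_meas : ∀ θ, Measurable fun x => pc x θ :=
    fun θ => hpc_meas.comp (measurable_id.prodMk measurable_const)
  have hq_lint : ∀ θ, ∫⁻ x, ENNReal.ofReal (pc x θ) = 1 := by
    intro θ
    have h := (hpc_prob θ).measure_univ
    rwa [withDensity_apply _ MeasurableSet.univ, Measure.restrict_univ] at h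
  have hq_int : ∀ θ, Integrable (fun x => pc x θ) volume := by
    intro θ
    refine ⟨(hq_meas θ).aestronglyMeasurable, ?_⟩
    rw [hasFiniteIntegral_iff_norm]
    have : ∀ x, ENNReal.ofReal ‖pc x θ‖ = ENNReal.ofReal (pc x θ) := fun x => by
      rw [Real.norm_eq_abs, abs_of_pos (hpc_pos x θ)]
    simp only [this, hq_lint θ]
    exact ENNReal.one_lt_top
  have hq_one : ∀ θ, ∫ x, pc x θ = 1 := by
    intro θ
    rw [integral_eq_lintegral_of_nonneg_ae (Filter.Eventually.of_forall fun x => (hpc_pos x θ).le)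
      (hq_meas θ).aestronglyMeasurable, hq_lint θ]
    simp
  -- abbreviations
  set ρ : EuclideanSpace ℝ (Fin dθ) × (Fin (m+1) → EuclideanSpace ℝ (Fin dx)) → ℝ :=
    fun z => pθ z.1 * ∏ i, pc (z.2 i) z.1 with hρdef
  have hρ_pos : ∀ z, 0 < ρ z :=
    fun z => mul_pos (hpθ_pos _) (Finset.prod_pos fun i _ => hpc_pos _ _)
  have hρ_meas : Measurable ρ := by
    refine (hpθ_meas.comp measurable_fst).mul (Finset.measurable_prod _ fun i _ => ?_)
    exact hpc_meas.comp (Measurable.prodMk ((measurable_pi_apply i).comp measurable_snd)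
      measurable_fst)
  have hμd : μ = volume.withDensity fun z => ((Real.toNNReal (ρ z) : ℝ≥0) : ℝ≥0∞) := by
    rw [hμ]; rfl
  have htransfer : ∀ g : EuclideanSpace ℝ (Fin dθ) × (Fin (m+1) → EuclideanSpace ℝ (Fin dx)) → ℝ,
      ∫ z, g z ∂μ = ∫ z, g z * ρ z := by
    intro g
    rw [hμd, integral_withDensity_eq_integral_smul hρ_meas.real_toNNReal]
    congr 1
    funext z
    simp [NNReal.smul_def, Real.coe_toNNReal _ (hρ_pos z).le, mul_comm]
  have htransfer_int : ∀ g : EuclideanSpace ℝ (Fin dθ) ×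
      (Fin (m+1) → EuclideanSpace ℝ (Fin dx)) → ℝ,
      Integrable g μ → Integrable (fun z => g z * ρ z) volume := by
    intro g hg
    rw [hμ] at hg
    have := (integrable_withDensity_iff hρ_meas.ennreal_ofReal
      (Filter.Eventually.of_forall fun z => ENNReal.ofReal_lt_top)).1 hg
    refine this.congr (Filter.Eventually.of_forall fun z => ?_)
    show _ * ENNReal.toReal _ = _
    congr 1
    exact ENNReal.toReal_ofReal (hρ_pos z).le
  -- the cross-term function
  have hfsum_int : Integrable (fun z => ∑ i, ‖fisherScore (z.2 i) z.1‖ ^ 2) μ :=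
    integrable_finset_sum _ fun i _ => hInt_fisher i
  have hPP_int : Integrable (fun z => ‖postScore z.1 z.2‖ ^ 2 - ‖priorScore z.1‖ ^ 2) μ :=
    hInt_post.sub hInt_prior
  have hC_int : Integrable (fun z => ‖postScore z.1 z.2‖ ^ 2 - ‖priorScore z.1‖ ^ 2
      - ∑ i, ‖fisherScore (z.2 i) z.1‖ ^ 2) μ := hPP_int.sub hfsum_int
  have hintC : ∫ z, (‖postScore z.1 z.2‖ ^ 2 - ‖priorScore z.1‖ ^ 2
        - ∑ i, ‖fisherScore (z.2 i) z.1‖ ^ 2) ∂μ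
      = ∫ z, ‖postScore z.1 z.2‖^2 ∂μ - ∫ z, ‖priorScore z.1‖^2 ∂μ
        - ∑ i, ∫ z, ‖fisherScore (z.2 i) z.1‖^2 ∂μ := by
    rw [integral_sub hPP_int hfsum_int, integral_sub hInt_post hInt_prior,
      integral_finset_sum _ fun i _ => hInt_fisher i]
  set C : EuclideanSpace ℝ (Fin dθ) × (Fin (m+1) → EuclideanSpace ℝ (Fin dx)) → ℝ :=
    fun z => ‖postScore z.1 z.2‖ ^ 2 - ‖priorScore z.1‖ ^ 2
      - ∑ i, ‖fisherScore (z.2 i) z.1‖ ^ 2 with hCdef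
  -- a.e. integrability of the conditional second moment
  have hA2 : ∀ᵐ θ ∂(volume : Measure (EuclideanSpace ℝ (Fin dθ))),
      Integrable (fun x => pc x θ * ‖fisherScore x θ‖^2) volume := by
    have hfish0_int : Integrable
        (fun z => ‖fisherScore (z.2 (0 : Fin (m+1))) z.1‖^2 * ρ z) volume :=
      htransfer_int _ (hInt_fisher 0)
    rw [Measure.volume_eq_prod _ _] at hfish0_int
    filter_upwards [hfish0_int.prod_right_ae] with θ hθ
    rw [volume_pi] at hθ
    set e := MeasurableEquiv.piFinSuccAbove
      (fun _ : Fin (m+1) => EuclideanSpace ℝ (Fin dx)) 0 with he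
    have hmp := MeasureTheory.measurePreserving_piFinSuccAbove
      (fun _ : Fin (m+1) => (volume : Measure (EuclideanSpace ℝ (Fin dx)))) 0
    have hsymm := hmp.symm e
    have hcomp := (hsymm.integrable_comp_emb
      (MeasurableEquiv.measurableEmbedding e.symm)).2 hθ
    have hval : ∀ (x : EuclideanSpace ℝ (Fin dx)) (rest : Fin m → EuclideanSpace ℝ (Fin dx)),
        ((fun xs => ‖fisherScore (xs 0) θ‖^2 * ρ (θ, xs)) ∘ e.symm) (x, rest)
        = (‖fisherScore x θ‖^2 * (pθ θ * pc x θ)) * ∏ j, pc (rest j) θ := by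
      intro x rest
      have h1 : e.symm (x, rest) = Fin.cons x rest := by
        simp [he, MeasurableEquiv.piFinSuccAbove_symm_apply, Fin.consEquiv]
      simp only [Function.comp_apply, h1, hρdef]
      rw [Fin.prod_univ_succ]
      simp only [Fin.cons_zero, Fin.cons_succ]
      ring
    have hrest : ∫ rest, (∏ j : Fin m, pc (rest j) θ)
        ∂(Measure.pi fun _ => (volume : Measure (EuclideanSpace ℝ (Fin dx)))) = 1 := by
      rw [← volume_pi, MeasureTheory.integral_fintype_prod_volume_eq_prod (ι := Fin m)
        (fun _ x => pc x θ)]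
      simp [hq_one θ]
    have hcomp2 : Integrable (fun p : EuclideanSpace ℝ (Fin dx) ×
        (Fin m → EuclideanSpace ℝ (Fin dx)) =>
        (‖fisherScore p.1 θ‖^2 * (pθ θ * pc p.1 θ)) * ∏ j, pc (p.2 j) θ)
        ((volume : Measure (EuclideanSpace ℝ (Fin dx))).prod
          (Measure.pi fun _ => (volume : Measure (EuclideanSpace ℝ (Fin dx))))) := by
      refine hcomp.congr (Filter.Eventually.of_forall fun p => ?_)
      exact hval p.1 p.2
    have happly := hcomp2.integral_prod_left
    have happly2 : Integrable (fun x => ‖fisherScore x θ‖^2 * (pθ θ * pc x θ)) volume := by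
      refine happly.congr (Filter.Eventually.of_forall fun x => ?_)
      show (∫ y : Fin m → EuclideanSpace ℝ (Fin dx),
        ‖fisherScore x θ‖^2 * (pθ θ * pc x θ) * ∏ j, pc (y j) θ
        ∂(Measure.pi fun _ => (volume : Measure (EuclideanSpace ℝ (Fin dx))))) = _
      rw [integral_const_mul, hrest, mul_one]
    have := happly2.const_mul (pθ θ)⁻¹
    refine this.congr (Filter.Eventually.of_forall fun x => ?_)
    field_simp [(hpθ_pos θ).ne']
  -- cross terms vanish
  have key0 : ∫ z, C z ∂μ = 0 := by
    have hCρ_int : Integrable (fun z => C z * ρ z) volume := htransfer_int C hC_int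
    rw [htransfer C]
    rw [Measure.volume_eq_prod _ _] at hCρ_int ⊢
    rw [integral_prod _ hCρ_int]
    apply integral_eq_zero_of_ae
    filter_upwards [hmean0, hA2] with θ h0 hA2θ
    show (∫ xs : Fin (m+1) → EuclideanSpace ℝ (Fin dx), C (θ, xs) * ρ (θ, xs)) = 0
    -- per-θ measurability and integrability facts
    have hFmeas : Measurable (fun x => fisherScore x θ) :=
      hfish_meas.comp (measurable_id.prodMk measurable_const)
    have hFk_meas : ∀ k : Fin dθ, Measurable (fun x => fisherScore x θ k) := by
      intro k
      exact (measurable_pi_apply k).comp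
        ((MeasurableEquiv.toLp 2 (Fin dθ → ℝ)).symm.measurable.comp hFmeas)
    have habs_le : ∀ (w : EuclideanSpace ℝ (Fin dθ)) (k : Fin dθ), |w k| ≤ ‖w‖ := by
      intro w k
      have h1 : (inner ℝ w (EuclideanSpace.single k (1:ℝ)) : ℝ) = w k := by
        rw [EuclideanSpace.inner_single_right]; simp
      calc |w k| = |(inner ℝ w (EuclideanSpace.single k (1:ℝ)) : ℝ)| := by rw [h1]
        _ ≤ ‖w‖ * ‖EuclideanSpace.single k (1:ℝ)‖ := abs_real_inner_le_norm _ _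
        _ = ‖w‖ := by rw [EuclideanSpace.norm_single]; simp
    have hbound : ∀ x, pc x θ * ‖fisherScore x θ‖
        ≤ pc x θ + pc x θ * ‖fisherScore x θ‖^2 := by
      intro x
      have h := (hpc_pos x θ).le
      nlinarith [sq_nonneg (‖fisherScore x θ‖ - 1), norm_nonneg (fisherScore x θ)]
    have hqF_int : Integrable (fun x => pc x θ • fisherScore x θ) volume := by
      refine Integrable.mono' ((hq_int θ).add hA2θ)
        ((hq_meas θ).aestronglyMeasurable.smul hFmeas.aestronglyMeasurable)
        (Filter.Eventually.of_forall fun x => ?_)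
      rw [norm_smul, Real.norm_eq_abs, abs_of_pos (hpc_pos x θ)]
      exact hbound x
    have hu_int : ∀ k : Fin dθ, Integrable (fun x => pc x θ * fisherScore x θ k) volume := by
      intro k
      refine Integrable.mono' ((hq_int θ).add hA2θ)
        (((hq_meas θ).mul (hFk_meas k)).aestronglyMeasurable)
        (Filter.Eventually.of_forall fun x => ?_)
      rw [Real.norm_eq_abs, abs_mul, abs_of_pos (hpc_pos x θ)]
      calc pc x θ * |fisherScore x θ k| ≤ pc x θ * ‖fisherScore x θ‖ :=
            mul_le_mul_of_nonneg_left (habs_le _ k) (hpc_pos x θ).le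
        _ ≤ _ := hbound x
    have hu0 : ∀ k : Fin dθ, ∫ x, pc x θ * fisherScore x θ k = 0 := by
      intro k
      have h1 := (EuclideanSpace.proj k (𝕜 := ℝ)).integral_comp_comm hqF_int
      rw [h0] at h1
      simpa using h1
    -- single-index factorized products
    have hGint : ∀ (i : Fin (m+1)) (k : Fin dθ), Integrable (fun xs : Fin (m+1) →
        EuclideanSpace ℝ (Fin dx) => ∏ j, (if j = i then (fun x => pc x θ * fisherScore x θ k)
          else fun x => pc x θ) (xs j)) volume := by
      intro i k
      refine Integrable.fintype_prod (f := fun j => if j = i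
        then (fun x => pc x θ * fisherScore x θ k) else fun x => pc x θ) fun j => ?_
      by_cases hj : j = i
      · simpa [hj] using hu_int k
      · simpa [hj] using hq_int θ
    have hGzero : ∀ (i : Fin (m+1)) (k : Fin dθ), (∫ xs : Fin (m+1) →
        EuclideanSpace ℝ (Fin dx), ∏ j, (if j = i then (fun x => pc x θ * fisherScore x θ k)
          else fun x => pc x θ) (xs j)) = 0 := by
      intro i k
      rw [MeasureTheory.integral_fintype_prod_volume_eq_prod]
      refine Finset.prod_eq_zero (Finset.mem_univ i) ?_
      rw [if_pos rfl]
      exact hu0 k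
    have hprod_single : ∀ (i : Fin (m+1)) (k : Fin dθ)
        (xs : Fin (m+1) → EuclideanSpace ℝ (Fin dx)),
        (∏ j, (if j = i then (fun x => pc x θ * fisherScore x θ k)
          else fun x => pc x θ) (xs j))
        = fisherScore (xs i) θ k * ∏ j, pc (xs j) θ := by
      intro i k xs
      rw [← Finset.mul_prod_erase Finset.univ _ (Finset.mem_univ i),
        ← Finset.mul_prod_erase Finset.univ (fun j => pc (xs j) θ) (Finset.mem_univ i)]
      have h1 : ∀ j ∈ Finset.univ.erase i, (if j = i
          then (fun x => pc x θ * fisherScore x θ k) else fun x => pc x θ) (xs j)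
          = pc (xs j) θ := by
        intro j hj
        rw [if_neg (Finset.ne_of_mem_erase hj)]
      rw [Finset.prod_congr rfl h1, if_pos rfl]
      show pc (xs i) θ * fisherScore (xs i) θ k * _ = _
      ring
    -- double-index factorized products
    have hHint : ∀ (i j : Fin (m+1)) (k : Fin dθ), Integrable (fun xs : Fin (m+1) →
        EuclideanSpace ℝ (Fin dx) => ∏ l, (if l = i then (fun x => pc x θ * fisherScore x θ k)
          else if l = j then (fun x => pc x θ * fisherScore x θ k)
          else fun x => pc x θ) (xs l)) volume := by
      intro i j k
      refine Integrable.fintype_prod (f := fun l => if l = i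
        then (fun x => pc x θ * fisherScore x θ k) else if l = j
        then (fun x => pc x θ * fisherScore x θ k) else fun x => pc x θ) fun l => ?_
      by_cases h1 : l = i
      · simpa [h1] using hu_int k
      · by_cases h2 : l = j
        · simpa [h1, h2] using hu_int k
        · simpa [h1, h2] using hq_int θ
    have hHzero : ∀ (i j : Fin (m+1)) (k : Fin dθ), (∫ xs : Fin (m+1) →
        EuclideanSpace ℝ (Fin dx), ∏ l, (if l = i then (fun x => pc x θ * fisherScore x θ k)
          else if l = j then (fun x => pc x θ * fisherScore x θ k)
          else fun x => pc x θ) (xs l)) = 0 := by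
      intro i j k
      rw [MeasureTheory.integral_fintype_prod_volume_eq_prod]
      refine Finset.prod_eq_zero (Finset.mem_univ i) ?_
      rw [if_pos rfl]
      exact hu0 k
    have hprod_double : ∀ (i j : Fin (m+1)), j ≠ i → ∀ (k : Fin dθ)
        (xs : Fin (m+1) → EuclideanSpace ℝ (Fin dx)),
        (∏ l, (if l = i then (fun x => pc x θ * fisherScore x θ k)
          else if l = j then (fun x => pc x θ * fisherScore x θ k)
          else fun x => pc x θ) (xs l))
        = fisherScore (xs i) θ k * fisherScore (xs j) θ k * ∏ l, pc (xs l) θ := by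
      intro i j hji k xs
      have hjmem : j ∈ Finset.univ.erase i := Finset.mem_erase.2 ⟨hji, Finset.mem_univ j⟩
      rw [← Finset.mul_prod_erase Finset.univ _ (Finset.mem_univ i),
        ← Finset.mul_prod_erase _ _ hjmem,
        ← Finset.mul_prod_erase Finset.univ (fun l => pc (xs l) θ) (Finset.mem_univ i),
        ← Finset.mul_prod_erase _ (fun l => pc (xs l) θ) hjmem]
      have h1 : ∀ l ∈ (Finset.univ.erase i).erase j, (if l = i
          then (fun x => pc x θ * fisherScore x θ k) else if l = j
          then (fun x => pc x θ * fisherScore x θ k) else fun x => pc x θ) (xs l)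
          = pc (xs l) θ := by
        intro l hl
        rw [if_neg (Finset.ne_of_mem_erase (Finset.mem_of_mem_erase hl)),
          if_neg (Finset.ne_of_mem_erase hl)]
      rw [Finset.prod_congr rfl h1, if_pos rfl, if_neg hji, if_pos rfl]
      show pc (xs i) θ * fisherScore (xs i) θ k
        * (pc (xs j) θ * fisherScore (xs j) θ k * _) = _
      ring
    -- the A-terms
    have hAform : ∀ (i : Fin (m+1)) (xs : Fin (m+1) → EuclideanSpace ℝ (Fin dx)),
        (inner ℝ (priorScore θ) (fisherScore (xs i) θ) : ℝ) * (∏ j, pc (xs j) θ)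
        = ∑ k, priorScore θ k * (∏ j, (if j = i
          then (fun x => pc x θ * fisherScore x θ k) else fun x => pc x θ) (xs j)) := by
      intro i xs
      rw [PiLp.inner_apply]
      simp only [RCLike.inner_apply, starRingEnd_apply, star_trivial]
      rw [Finset.sum_mul]
      refine Finset.sum_congr rfl fun k _ => ?_
      rw [hprod_single i k xs]
      ring
    have hA_int : ∀ i : Fin (m+1), Integrable (fun xs : Fin (m+1) →
        EuclideanSpace ℝ (Fin dx) =>
        (inner ℝ (priorScore θ) (fisherScore (xs i) θ) : ℝ) * ∏ j, pc (xs j) θ) volume := by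
      intro i
      have := integrable_finset_sum (μ := (volume : Measure (Fin (m+1) →
        EuclideanSpace ℝ (Fin dx)))) Finset.univ
        (fun (k : Fin dθ) _ => (hGint i k).const_mul (priorScore θ k))
      exact this.congr (Filter.Eventually.of_forall fun xs => (hAform i xs).symm)
    have hA0 : ∀ i : Fin (m+1), (∫ xs : Fin (m+1) → EuclideanSpace ℝ (Fin dx),
        (inner ℝ (priorScore θ) (fisherScore (xs i) θ) : ℝ) * ∏ j, pc (xs j) θ) = 0 := by
      intro i
      rw [integral_congr_ae (Filter.Eventually.of_forall (hAform i)),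
        integral_finset_sum _ (fun k _ => (hGint i k).const_mul _)]
      refine Finset.sum_eq_zero fun k _ => ?_
      rw [integral_const_mul, hGzero i k, mul_zero]
    -- the B-terms
    have hBform : ∀ (i j : Fin (m+1)), j ≠ i →
        ∀ xs : Fin (m+1) → EuclideanSpace ℝ (Fin dx),
        (inner ℝ (fisherScore (xs i) θ) (fisherScore (xs j) θ) : ℝ) * (∏ l, pc (xs l) θ)
        = ∑ k, (∏ l, (if l = i then (fun x => pc x θ * fisherScore x θ k)
          else if l = j then (fun x => pc x θ * fisherScore x θ k)
          else fun x => pc x θ) (xs l)) := by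
      intro i j hji xs
      rw [PiLp.inner_apply]
      simp only [RCLike.inner_apply, starRingEnd_apply, star_trivial]
      rw [Finset.sum_mul]
      refine Finset.sum_congr rfl fun k _ => ?_
      rw [hprod_double i j hji k xs]
      ring
    have hB_int : ∀ (i j : Fin (m+1)), j ≠ i → Integrable (fun xs : Fin (m+1) →
        EuclideanSpace ℝ (Fin dx) =>
        (inner ℝ (fisherScore (xs i) θ) (fisherScore (xs j) θ) : ℝ)
          * ∏ l, pc (xs l) θ) volume := by
      intro i j hji
      have := integrable_finset_sum (μ := (volume : Measure (Fin (m+1) →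
        EuclideanSpace ℝ (Fin dx)))) Finset.univ (fun (k : Fin dθ) _ => hHint i j k)
      exact this.congr (Filter.Eventually.of_forall fun xs => (hBform i j hji xs).symm)
    have hB0 : ∀ (i j : Fin (m+1)), j ≠ i →
        (∫ xs : Fin (m+1) → EuclideanSpace ℝ (Fin dx),
        (inner ℝ (fisherScore (xs i) θ) (fisherScore (xs j) θ) : ℝ)
          * ∏ l, pc (xs l) θ) = 0 := by
      intro i j hji
      rw [integral_congr_ae (Filter.Eventually.of_forall (hBform i j hji)),
        integral_finset_sum _ (fun k _ => hHint i j k)]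
      exact Finset.sum_eq_zero fun k _ => hHzero i j k
    -- pointwise form of the integrand
    have hC1 : ∀ xs : Fin (m+1) → EuclideanSpace ℝ (Fin dx), C (θ, xs)
        = 2 * (inner ℝ (priorScore θ) (∑ i, fisherScore (xs i) θ) : ℝ)
          + ∑ i, ∑ j ∈ Finset.univ.erase i,
            (inner ℝ (fisherScore (xs i) θ) (fisherScore (xs j) θ) : ℝ) := by
      intro xs
      have hpost2 : ‖postScore θ xs‖^2 = ‖priorScore θ‖^2
          + 2 * (inner ℝ (priorScore θ) (∑ i, fisherScore (xs i) θ) : ℝ)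
          + ‖∑ i, fisherScore (xs i) θ‖^2 := by
        rw [hdecomp θ xs, norm_add_sq_real]
      have hS2 : ‖∑ i, fisherScore (xs i) θ‖^2
          = ∑ i, ‖fisherScore (xs i) θ‖^2 + ∑ i, ∑ j ∈ Finset.univ.erase i,
            (inner ℝ (fisherScore (xs i) θ) (fisherScore (xs j) θ) : ℝ) := by
        rw [← real_inner_self_eq_norm_sq, sum_inner]
        have hsplit : ∀ i : Fin (m+1),
            (inner ℝ (fisherScore (xs i) θ) (∑ j, fisherScore (xs j) θ) : ℝ)
            = ‖fisherScore (xs i) θ‖^2 + ∑ j ∈ Finset.univ.erase i,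
              (inner ℝ (fisherScore (xs i) θ) (fisherScore (xs j) θ) : ℝ) := by
          intro i
          rw [inner_sum, ← Finset.add_sum_erase _ _ (Finset.mem_univ i),
            real_inner_self_eq_norm_sq]
        rw [Finset.sum_congr rfl fun i _ => hsplit i, Finset.sum_add_distrib]
      show ‖postScore θ xs‖^2 - ‖priorScore θ‖^2 - ∑ i, ‖fisherScore (xs i) θ‖^2 = _
      rw [hpost2, hS2]
      ring
    have hform : ∀ xs : Fin (m+1) → EuclideanSpace ℝ (Fin dx),
        C (θ, xs) * ρ (θ, xs)
        = pθ θ * (2 * (∑ i, (inner ℝ (priorScore θ) (fisherScore (xs i) θ) : ℝ)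
            * ∏ j, pc (xs j) θ)
          + ∑ i, ∑ j ∈ Finset.univ.erase i,
            ((inner ℝ (fisherScore (xs i) θ) (fisherScore (xs j) θ) : ℝ)
              * ∏ l, pc (xs l) θ)) := by
      intro xs
      have hinner_sum : (inner ℝ (priorScore θ) (∑ i, fisherScore (xs i) θ) : ℝ)
          = ∑ i, (inner ℝ (priorScore θ) (fisherScore (xs i) θ) : ℝ) := inner_sum _ _ _
      rw [hC1 xs, hρdef, hinner_sum]
      show (2 * ∑ i, (inner ℝ (priorScore θ) (fisherScore (xs i) θ) : ℝ)
          + ∑ i, ∑ j ∈ Finset.univ.erase i,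
            (inner ℝ (fisherScore (xs i) θ) (fisherScore (xs j) θ) : ℝ))
          * (pθ θ * ∏ j, pc (xs j) θ) = _
      have e1 : (∑ i, (inner ℝ (priorScore θ) (fisherScore (xs i) θ) : ℝ))
          * (∏ j, pc (xs j) θ)
          = ∑ i, (inner ℝ (priorScore θ) (fisherScore (xs i) θ) : ℝ)
            * ∏ j, pc (xs j) θ := Finset.sum_mul _ _ _
      have e2 : (∑ i, ∑ j ∈ Finset.univ.erase i,
            (inner ℝ (fisherScore (xs i) θ) (fisherScore (xs j) θ) : ℝ))
          * (∏ l, pc (xs l) θ)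
          = ∑ i, ∑ j ∈ Finset.univ.erase i,
            ((inner ℝ (fisherScore (xs i) θ) (fisherScore (xs j) θ) : ℝ)
              * ∏ l, pc (xs l) θ) := by
        rw [Finset.sum_mul]
        exact Finset.sum_congr rfl fun i _ => Finset.sum_mul _ _ _
      rw [← e1, ← e2]
      ring
    -- put everything together
    have hsum1_int : Integrable (fun xs : Fin (m+1) → EuclideanSpace ℝ (Fin dx) =>
        2 * ∑ i, (inner ℝ (priorScore θ) (fisherScore (xs i) θ) : ℝ)
          * ∏ j, pc (xs j) θ) volume := by
      have := integrable_finset_sum (μ := (volume : Measure (Fin (m+1) →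
        EuclideanSpace ℝ (Fin dx)))) Finset.univ (fun (i : Fin (m+1)) _ => hA_int i)
      exact (this.const_mul 2).congr (Filter.Eventually.of_forall fun xs => rfl)
    have hsum2_int : Integrable (fun xs : Fin (m+1) → EuclideanSpace ℝ (Fin dx) =>
        ∑ i, ∑ j ∈ Finset.univ.erase i,
          ((inner ℝ (fisherScore (xs i) θ) (fisherScore (xs j) θ) : ℝ)
            * ∏ l, pc (xs l) θ)) volume := by
      refine integrable_finset_sum Finset.univ (fun (i : Fin (m+1)) _ => ?_)
      exact integrable_finset_sum _ fun j hj => hB_int i j (Finset.ne_of_mem_erase hj)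
    rw [integral_congr_ae (Filter.Eventually.of_forall hform), integral_const_mul,
      integral_add hsum1_int hsum2_int, integral_const_mul,
      integral_finset_sum _ (fun i _ => hA_int i),
      integral_finset_sum _ (fun i _ => integrable_finset_sum _
        fun j hj => hB_int i j (Finset.ne_of_mem_erase hj))]
    have z1 : ∑ i : Fin (m+1), (∫ xs : Fin (m+1) → EuclideanSpace ℝ (Fin dx),
        (inner ℝ (priorScore θ) (fisherScore (xs i) θ) : ℝ) * ∏ j, pc (xs j) θ) = 0 :=
      Finset.sum_eq_zero fun i _ => hA0 i
    have z2 : ∑ i : Fin (m+1), (∫ xs : Fin (m+1) → EuclideanSpace ℝ (Fin dx),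
        ∑ j ∈ Finset.univ.erase i,
        ((inner ℝ (fisherScore (xs i) θ) (fisherScore (xs j) θ) : ℝ) * ∏ l, pc (xs l) θ)) = 0 := by
      refine Finset.sum_eq_zero fun i _ => ?_
      rw [integral_finset_sum _ (fun j hj => hB_int i j (Finset.ne_of_mem_erase hj))]
      exact Finset.sum_eq_zero fun j hj => hB0 i j (Finset.ne_of_mem_erase hj)
    rw [z1, z2]
    ring
  -- the spectral-norm part
  have hcoordz_meas : ∀ (i : Fin (m+1)) (k : Fin dθ),
      Measurable (fun z : EuclideanSpace ℝ (Fin dθ) ×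
        (Fin (m+1) → EuclideanSpace ℝ (Fin dx)) => fisherScore (z.2 i) z.1 k) := by
    intro i k
    exact (measurable_pi_apply k).comp
      ((MeasurableEquiv.toLp 2 (Fin dθ → ℝ)).symm.measurable.comp (hfe_meas i))
  have hspec_meas : Measurable (fun z : EuclideanSpace ℝ (Fin dθ) ×
      (Fin (m+1) → EuclideanSpace ℝ (Fin dx)) =>
      specNorm ((((m+1 : ℕ) : ℝ))⁻¹ • ∑ i, outer (fisherScore (z.2 i) z.1))) := by
    let Ψ : (Fin dθ → Fin dθ → ℝ) →ₗ[ℝ]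
        (EuclideanSpace ℝ (Fin dθ) →L[ℝ] EuclideanSpace ℝ (Fin dθ)) :=
      { toFun := fun g => Aux.mCLM (Matrix.of g)
        map_add' := fun g h => by
          show Aux.mCLM (Matrix.of g + Matrix.of h) = _
          rw [_root_.map_add]
        map_smul' := fun c g => by
          show Aux.mCLM (c • Matrix.of g) = _
          rw [_root_.map_smul]
          rfl }
    have hent : Measurable (fun z : EuclideanSpace ℝ (Fin dθ) ×
        (Fin (m+1) → EuclideanSpace ℝ (Fin dx)) =>
        (fun k l => (((m+1 : ℕ) : ℝ))⁻¹
          * ∑ i, fisherScore (z.2 i) z.1 k * fisherScore (z.2 i) z.1 l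
          : Fin dθ → Fin dθ → ℝ)) := by
      refine measurable_pi_lambda _ fun k => measurable_pi_lambda _ fun l => ?_
      exact (Finset.measurable_sum _ fun i _ =>
        (hcoordz_meas i k).mul (hcoordz_meas i l)).const_mul _
    have hcont : Continuous Ψ := Ψ.continuous_of_finiteDimensional
    have heq : ∀ z : EuclideanSpace ℝ (Fin dθ) × (Fin (m+1) → EuclideanSpace ℝ (Fin dx)),
        specNorm ((((m+1 : ℕ) : ℝ))⁻¹ • ∑ i, outer (fisherScore (z.2 i) z.1))
        = ‖Ψ (fun k l => (((m+1 : ℕ) : ℝ))⁻¹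
          * ∑ i, fisherScore (z.2 i) z.1 k * fisherScore (z.2 i) z.1 l)‖ := by
      intro z
      rw [Aux.specNorm_eq]
      show ‖Aux.mCLM _‖ = ‖Aux.mCLM (Matrix.of _)‖
      have hmatrix : ((((m+1 : ℕ) : ℝ))⁻¹ • ∑ i, outer (fisherScore (z.2 i) z.1))
          = Matrix.of (fun k l => (((m+1 : ℕ) : ℝ))⁻¹
            * ∑ i, fisherScore (z.2 i) z.1 k * fisherScore (z.2 i) z.1 l) := by
        ext k l
        simp only [Matrix.smul_apply, Matrix.sum_apply, outer, Matrix.of_apply, smul_eq_mul]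
      rw [hmatrix]
      rfl
    have : (fun z : EuclideanSpace ℝ (Fin dθ) × (Fin (m+1) → EuclideanSpace ℝ (Fin dx)) =>
        specNorm ((((m+1 : ℕ) : ℝ))⁻¹ • ∑ i, outer (fisherScore (z.2 i) z.1)))
        = fun z => ‖Ψ (fun k l => (((m+1 : ℕ) : ℝ))⁻¹
          * ∑ i, fisherScore (z.2 i) z.1 k * fisherScore (z.2 i) z.1 l)‖ := funext heq
    rw [this]
    exact (continuous_norm.comp hcont).measurable.comp hent
  have hspec_nonneg : ∀ z : EuclideanSpace ℝ (Fin dθ) ×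
      (Fin (m+1) → EuclideanSpace ℝ (Fin dx)),
      0 ≤ specNorm ((((m+1 : ℕ) : ℝ))⁻¹ • ∑ i, outer (fisherScore (z.2 i) z.1)) := by
    intro z
    rw [Aux.specNorm_eq]
    exact norm_nonneg _
  have hspec_ptwise : ∀ z : EuclideanSpace ℝ (Fin dθ) ×
      (Fin (m+1) → EuclideanSpace ℝ (Fin dx)),
      ((m+1 : ℕ) : ℝ) * specNorm ((((m+1 : ℕ) : ℝ))⁻¹ • ∑ i, outer (fisherScore (z.2 i) z.1))
      ≤ ∑ i, ‖fisherScore (z.2 i) z.1‖^2 :=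
    fun z => Aux.spec_bound hM _
  have hMpos : (0:ℝ) < ((m+1 : ℕ) : ℝ) := by positivity
  have hspec_ptwise' : ∀ z : EuclideanSpace ℝ (Fin dθ) ×
      (Fin (m+1) → EuclideanSpace ℝ (Fin dx)),
      specNorm ((((m+1 : ℕ) : ℝ))⁻¹ • ∑ i, outer (fisherScore (z.2 i) z.1))
      ≤ (((m+1 : ℕ) : ℝ))⁻¹ * ∑ i, ‖fisherScore (z.2 i) z.1‖^2 := by
    intro z
    rw [← mul_le_mul_iff_right₀ hMpos]
    calc ((m+1 : ℕ) : ℝ) * specNorm _ ≤ ∑ i, ‖fisherScore (z.2 i) z.1‖^2 := hspec_ptwise z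
      _ = ((m+1 : ℕ) : ℝ) * ((((m+1 : ℕ) : ℝ))⁻¹ * ∑ i, ‖fisherScore (z.2 i) z.1‖^2) := by
        field_simp
  have hspec_int : Integrable (fun z : EuclideanSpace ℝ (Fin dθ) ×
      (Fin (m+1) → EuclideanSpace ℝ (Fin dx)) =>
      specNorm ((((m+1 : ℕ) : ℝ))⁻¹ • ∑ i, outer (fisherScore (z.2 i) z.1))) μ := by
    refine Integrable.mono' (hfsum_int.const_mul ((((m+1 : ℕ) : ℝ))⁻¹))
      hspec_meas.aestronglyMeasurable (Filter.Eventually.of_forall fun z => ?_)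
    rw [Real.norm_eq_abs, abs_of_nonneg (hspec_nonneg z)]
    exact hspec_ptwise' z
  have hspec_le : ((m+1 : ℕ) : ℝ) * ∫ z, specNorm ((((m+1 : ℕ) : ℝ))⁻¹
        • ∑ i, outer (fisherScore (z.2 i) z.1)) ∂μ
      ≤ ∑ i, ∫ z, ‖fisherScore (z.2 i) z.1‖^2 ∂μ := by
    have h1 : ∫ z, specNorm ((((m+1 : ℕ) : ℝ))⁻¹ • ∑ i, outer (fisherScore (z.2 i) z.1)) ∂μ
        ≤ ∫ z, (((m+1 : ℕ) : ℝ))⁻¹ * ∑ i, ‖fisherScore (z.2 i) z.1‖^2 ∂μ :=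
      integral_mono hspec_int (hfsum_int.const_mul _) hspec_ptwise'
    rw [integral_const_mul, integral_finset_sum _ (fun i _ => hInt_fisher i)] at h1
    calc ((m+1 : ℕ) : ℝ) * ∫ z, specNorm ((((m+1 : ℕ) : ℝ))⁻¹
          • ∑ i, outer (fisherScore (z.2 i) z.1)) ∂μ
        ≤ ((m+1 : ℕ) : ℝ) * ((((m+1 : ℕ) : ℝ))⁻¹
          * ∑ i, ∫ z, ‖fisherScore (z.2 i) z.1‖^2 ∂μ) :=
          mul_le_mul_of_nonneg_left h1 hMpos.le
      _ = ∑ i, ∫ z, ‖fisherScore (z.2 i) z.1‖^2 ∂μ := by field_simp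
  rw [hintC] at key0
  linarith [hspec_le, key0]
end

section
/- Let a_l < a_h be reals, α > 2, β > 2, and let κ be a random variable with the four-parameter Beta density p(κ) = (κ − a_l)^{α−1}·(a_h − κ)^{β−1} / ( (a_h − a_l)^{α+β−1}·B(α,β) ) on (a_l, a_h), where B(α,β) = Γ(α)Γ(β)/Γ(α+β). Then the prior Fisher information of κ is E[ ( (α−1)/(κ − a_l) − (β−1)/(a_h − κ) )² ] = ( (α+β−1)·(α+β−2) / (a_h − a_l)² )·( 1/(α−2) + 1/(β−2) ). -/
set_option maxHeartbeats 1000000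
open MeasureTheory intervalIntegral

lemma cpow_eq_ofReal {x y : ℝ} (hx : 0 ≤ x) :
    (x:ℂ) ^ ((y:ℂ) - 1) = ((x ^ (y - 1) : ℝ) : ℂ) := by
  rw [show ((y:ℂ) - 1) = ((y - 1 : ℝ) : ℂ) by push_cast; ring, ← Complex.ofReal_cpow hx]

lemma realBeta_integrable {a b : ℝ} (ha : 0 < a) (hb : 0 < b) :
    IntervalIntegrable (fun x : ℝ => x ^ (a - 1) * (1 - x) ^ (b - 1)) volume 0 1 := by
  have h := (Complex.betaIntegral_convergent (u := (a : ℂ)) (v := (b : ℂ))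
    (by simpa using ha) (by simpa using hb)).norm
  apply h.congr
  intro x hx
  rw [Set.uIoc_of_le (by norm_num : (0:ℝ) ≤ 1)] at hx
  have hx0 : (0:ℝ) ≤ x := le_of_lt hx.1
  have hx1 : (0:ℝ) ≤ 1 - x := by linarith [hx.2]
  have e1 := cpow_eq_ofReal (y := a) hx0
  have e2 := cpow_eq_ofReal (y := b) hx1
  push_cast at e1 e2 ⊢
  rw [norm_mul, e1, e2, Complex.norm_real, Complex.norm_real,
    Real.norm_of_nonneg (Real.rpow_nonneg hx0 _),
    Real.norm_of_nonneg (Real.rpow_nonneg hx1 _)]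

lemma realBeta {a b : ℝ} (ha : 0 < a) (hb : 0 < b) :
    ∫ x in (0:ℝ)..1, x ^ (a - 1) * (1 - x) ^ (b - 1)
      = Real.Gamma a * Real.Gamma b / Real.Gamma (a + b) := by
  have h := Complex.Gamma_mul_Gamma_eq_betaIntegral (s := (a : ℂ)) (t := (b : ℂ))
    (by simpa using ha) (by simpa using hb)
  have hC : Complex.betaIntegral a b
      = ((∫ x in (0:ℝ)..1, x ^ (a - 1) * (1 - x) ^ (b - 1) : ℝ) : ℂ) := by
    rw [Complex.betaIntegral, ← intervalIntegral.integral_ofReal]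
    apply intervalIntegral.integral_congr
    intro x hx
    rw [Set.uIcc_of_le (by norm_num : (0:ℝ) ≤ 1)] at hx
    have hx0 : (0:ℝ) ≤ x := hx.1
    have hx1 : (0:ℝ) ≤ 1 - x := by linarith [hx.2]
    have e1 := cpow_eq_ofReal (y := a) hx0
    have e2 := cpow_eq_ofReal (y := b) hx1
    push_cast at e1 e2 ⊢
    rw [e1, e2]
  rw [hC, ← Complex.ofReal_add, Complex.Gamma_ofReal, Complex.Gamma_ofReal,
    Complex.Gamma_ofReal, ← Complex.ofReal_mul, ← Complex.ofReal_mul] at h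
  have hr : Real.Gamma a * Real.Gamma b
      = Real.Gamma (a + b) * ∫ x in (0:ℝ)..1, x ^ (a - 1) * (1 - x) ^ (b - 1) :=
    Complex.ofReal_inj.mp h
  have hG : Real.Gamma (a + b) ≠ 0 := (Real.Gamma_pos_of_pos (by linarith)).ne'
  field_simp
  linarith [hr]

lemma pointwise_expand (α β K t B : ℝ) (hα : 2 < α) (hβ : 2 < β)
    (hK : 0 < K) (ht : 0 < t) (ht1 : t < 1) (hB : B ≠ 0) :
    ((α - 1) / (K * t) - (β - 1) / (K * (1 - t))) ^ 2 *
      ((K * t) ^ (α - 1) * (K * (1 - t)) ^ (β - 1) / (K ^ (α + β - 1) * B))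
    = ((α - 1) ^ 2 * (t ^ ((α - 2) - 1) * (1 - t) ^ (β - 1))
        - 2 * (α - 1) * (β - 1) * (t ^ ((α - 1) - 1) * (1 - t) ^ ((β - 1) - 1))
        + (β - 1) ^ 2 * (t ^ (α - 1) * (1 - t) ^ ((β - 2) - 1))) / (K ^ 3 * B) := by
  have ht1' : 0 < 1 - t := by linarith
  have e1 : (K * t) ^ (α - 1) = K ^ (α - 1) * t ^ (α - 1) :=
    Real.mul_rpow hK.le ht.le
  have e2 : (K * (1 - t)) ^ (β - 1) = K ^ (β - 1) * (1 - t) ^ (β - 1) :=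
    Real.mul_rpow hK.le ht1'.le
  have e3 : K ^ (α + β - 1) = K ^ (α - 1) * K ^ (β - 1) * K := by
    rw [show α + β - 1 = (α - 1) + (β - 1) + 1 by ring, Real.rpow_add hK,
      Real.rpow_add hK, Real.rpow_one]
  have hA1 : t ^ (α - 1) = t ^ ((α - 2) - 1) * t ^ 2 := by
    rw [show α - 1 = ((α - 2) - 1) + 2 by ring, Real.rpow_add ht,
      show (2:ℝ) = ((2:ℕ):ℝ) by norm_num, Real.rpow_natCast]
  have hA2 : t ^ ((α - 1) - 1) = t ^ ((α - 2) - 1) * t := by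
    rw [show (α - 1) - 1 = ((α - 2) - 1) + 1 by ring, Real.rpow_add ht, Real.rpow_one]
  have hB1 : (1 - t) ^ (β - 1) = (1 - t) ^ ((β - 2) - 1) * (1 - t) ^ 2 := by
    rw [show β - 1 = ((β - 2) - 1) + 2 by ring, Real.rpow_add ht1',
      show (2:ℝ) = ((2:ℕ):ℝ) by norm_num, Real.rpow_natCast]
  have hB2 : (1 - t) ^ ((β - 1) - 1) = (1 - t) ^ ((β - 2) - 1) * (1 - t) := by
    rw [show (β - 1) - 1 = ((β - 2) - 1) + 1 by ring, Real.rpow_add ht1', Real.rpow_one]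
  rw [e1, e2, e3, hA1, hA2, hB1, hB2]
  have nK1 : K ^ (α - 1) ≠ 0 := (Real.rpow_pos_of_pos hK _).ne'
  have nK2 : K ^ (β - 1) ≠ 0 := (Real.rpow_pos_of_pos hK _).ne'
  field_simp
  ring


open MeasureTheory

/-- the prior Fisher information of a four-parameter Beta
distribution. -/
theorem beta_prior_fisher_information
    (al ah α β : ℝ) (h_lt : al < ah) (hα : 2 < α) (hβ : 2 < β)
    (B : ℝ) (hB : B = Real.Gamma α * Real.Gamma β / Real.Gamma (α + β))
    -- the four-parameter Beta density on (al, ah)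
    (p : ℝ → ℝ) (hp : p = fun κ =>
      (κ - al) ^ (α - 1) * (ah - κ) ^ (β - 1) / ((ah - al) ^ (α + β - 1) * B)) :
    ∫ κ in Set.Ioo al ah,
        ((α - 1) / (κ - al) - (β - 1) / (ah - κ)) ^ 2 * p κ
      = ((α + β - 1) * (α + β - 2) / (ah - al) ^ 2)
          * (1 / (α - 2) + 1 / (β - 2)) := by
  have hK : 0 < ah - al := sub_pos.mpr h_lt
  have hA : 0 < Real.Gamma (α - 2) := Real.Gamma_pos_of_pos (by linarith)
  have hB2 : 0 < Real.Gamma (β - 2) := Real.Gamma_pos_of_pos (by linarith)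
  have hC : 0 < Real.Gamma (α + β - 2) := Real.Gamma_pos_of_pos (by linarith)
  -- Gamma recurrences
  have gα1 : Real.Gamma (α - 1) = (α - 2) * Real.Gamma (α - 2) := by
    have h := Real.Gamma_add_one (s := α - 2) (by linarith)
    rwa [show α - 2 + 1 = α - 1 by ring] at h
  have gα : Real.Gamma α = (α - 1) * ((α - 2) * Real.Gamma (α - 2)) := by
    have h := Real.Gamma_add_one (s := α - 1) (by linarith)
    rw [show α - 1 + 1 = α by ring] at h
    rw [h, gα1]
  have gβ1 : Real.Gamma (β - 1) = (β - 2) * Real.Gamma (β - 2) := by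
    have h := Real.Gamma_add_one (s := β - 2) (by linarith)
    rwa [show β - 2 + 1 = β - 1 by ring] at h
  have gβ : Real.Gamma β = (β - 1) * ((β - 2) * Real.Gamma (β - 2)) := by
    have h := Real.Gamma_add_one (s := β - 1) (by linarith)
    rw [show β - 1 + 1 = β by ring] at h
    rw [h, gβ1]
  have gγ1 : Real.Gamma (α + β - 1) = (α + β - 2) * Real.Gamma (α + β - 2) := by
    have h := Real.Gamma_add_one (s := α + β - 2) (by linarith)
    rwa [show α + β - 2 + 1 = α + β - 1 by ring] at h
  have gγ : Real.Gamma (α + β)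
      = (α + β - 1) * ((α + β - 2) * Real.Gamma (α + β - 2)) := by
    have h := Real.Gamma_add_one (s := α + β - 1) (by linarith)
    rw [show α + β - 1 + 1 = α + β by ring] at h
    rw [h, gγ1]
  have hBpos : 0 < B := by
    rw [hB]
    exact div_pos (mul_pos (Real.Gamma_pos_of_pos (by linarith))
      (Real.Gamma_pos_of_pos (by linarith))) (Real.Gamma_pos_of_pos (by linarith))
  -- the three beta integrals on (0,1)
  have I1 : ∫ t in Set.Ioo (0:ℝ) 1, t ^ ((α - 2) - 1) * (1 - t) ^ (β - 1)
      = Real.Gamma (α - 2) * Real.Gamma β / Real.Gamma (α + β - 2) := by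
    rw [← integral_Ioc_eq_integral_Ioo,
      ← intervalIntegral.integral_of_le (by norm_num : (0:ℝ) ≤ 1),
      realBeta (by linarith) (by linarith : (0:ℝ) < β),
      show α - 2 + β = α + β - 2 by ring]
  have I2 : ∫ t in Set.Ioo (0:ℝ) 1, t ^ ((α - 1) - 1) * (1 - t) ^ ((β - 1) - 1)
      = Real.Gamma (α - 1) * Real.Gamma (β - 1) / Real.Gamma (α + β - 2) := by
    rw [← integral_Ioc_eq_integral_Ioo,
      ← intervalIntegral.integral_of_le (by norm_num : (0:ℝ) ≤ 1),
      realBeta (by linarith) (by linarith : (0:ℝ) < β - 1),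
      show α - 1 + (β - 1) = α + β - 2 by ring]
  have I3 : ∫ t in Set.Ioo (0:ℝ) 1, t ^ (α - 1) * (1 - t) ^ ((β - 2) - 1)
      = Real.Gamma α * Real.Gamma (β - 2) / Real.Gamma (α + β - 2) := by
    rw [← integral_Ioc_eq_integral_Ioo,
      ← intervalIntegral.integral_of_le (by norm_num : (0:ℝ) ≤ 1),
      realBeta (by linarith) (by linarith : (0:ℝ) < β - 2),
      show α + (β - 2) = α + β - 2 by ring]
  -- integrability on (0,1)
  have hsub : Set.Ioo (0:ℝ) 1 ⊆ Set.uIoc (0:ℝ) 1 := by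
    rw [Set.uIoc_of_le (by norm_num : (0:ℝ) ≤ 1)]
    exact Set.Ioo_subset_Ioc_self
  have J1 : IntegrableOn (fun t : ℝ => t ^ ((α - 2) - 1) * (1 - t) ^ (β - 1))
      (Set.Ioo (0:ℝ) 1) :=
    (intervalIntegrable_iff.mp (realBeta_integrable (by linarith)
      (by linarith : (0:ℝ) < β))).mono_set hsub
  have J2 : IntegrableOn (fun t : ℝ => t ^ ((α - 1) - 1) * (1 - t) ^ ((β - 1) - 1))
      (Set.Ioo (0:ℝ) 1) :=
    (intervalIntegrable_iff.mp (realBeta_integrable (by linarith)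
      (by linarith : (0:ℝ) < β - 1))).mono_set hsub
  have J3 : IntegrableOn (fun t : ℝ => t ^ (α - 1) * (1 - t) ^ ((β - 2) - 1))
      (Set.Ioo (0:ℝ) 1) :=
    (intervalIntegrable_iff.mp (realBeta_integrable (by linarith)
      (by linarith : (0:ℝ) < β - 2))).mono_set hsub
  -- change of variables to (0,1)
  simp only [hp]
  rw [← integral_Ioc_eq_integral_Ioo, ← intervalIntegral.integral_of_le h_lt.le]
  have hcv := intervalIntegral.integral_comp_mul_add (a := 0) (b := 1)
    (f := fun κ => ((α - 1) / (κ - al) - (β - 1) / (ah - κ)) ^ 2 *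
      ((κ - al) ^ (α - 1) * (ah - κ) ^ (β - 1) / ((ah - al) ^ (α + β - 1) * B)))
    (c := ah - al) hK.ne' al
  rw [show (ah - al) * 0 + al = al by ring, show (ah - al) * 1 + al = ah by ring] at hcv
  have h2 : (∫ κ in al..ah, ((α - 1) / (κ - al) - (β - 1) / (ah - κ)) ^ 2 *
        ((κ - al) ^ (α - 1) * (ah - κ) ^ (β - 1) / ((ah - al) ^ (α + β - 1) * B)))
      = (ah - al) • ∫ t in (0:ℝ)..1,
          ((α - 1) / ((ah - al) * t + al - al) - (β - 1) / (ah - ((ah - al) * t + al))) ^ 2 *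
          (((ah - al) * t + al - al) ^ (α - 1) * (ah - ((ah - al) * t + al)) ^ (β - 1) /
            ((ah - al) ^ (α + β - 1) * B)) := by
    rw [hcv, smul_smul, mul_inv_cancel₀ hK.ne', one_smul]
  rw [h2, intervalIntegral.integral_of_le (by norm_num : (0:ℝ) ≤ 1),
    integral_Ioc_eq_integral_Ioo]
  rw [setIntegral_congr_fun measurableSet_Ioo (g := fun t : ℝ =>
      ((α - 1) ^ 2 * (t ^ ((α - 2) - 1) * (1 - t) ^ (β - 1))
        - 2 * (α - 1) * (β - 1) * (t ^ ((α - 1) - 1) * (1 - t) ^ ((β - 1) - 1))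
        + (β - 1) ^ 2 * (t ^ (α - 1) * (1 - t) ^ ((β - 2) - 1))) / ((ah - al) ^ 3 * B))
    (fun t ht => by
      simp only
      rw [show (ah - al) * t + al - al = (ah - al) * t by ring,
        show ah - ((ah - al) * t + al) = (ah - al) * (1 - t) by ring]
      exact pointwise_expand α β (ah - al) t B hα hβ hK ht.1 ht.2 hBpos.ne')]
  have K12 : Integrable (fun t : ℝ =>
      (α - 1) ^ 2 * (t ^ ((α - 2) - 1) * (1 - t) ^ (β - 1))
        - 2 * (α - 1) * (β - 1) * (t ^ ((α - 1) - 1) * (1 - t) ^ ((β - 1) - 1)))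
      (volume.restrict (Set.Ioo (0:ℝ) 1)) := (J1.const_mul _).sub (J2.const_mul _)
  have K3 : Integrable (fun t : ℝ =>
      (β - 1) ^ 2 * (t ^ (α - 1) * (1 - t) ^ ((β - 2) - 1)))
      (volume.restrict (Set.Ioo (0:ℝ) 1)) := J3.const_mul _
  rw [MeasureTheory.integral_div, MeasureTheory.integral_add K12 K3,
    MeasureTheory.integral_sub (J1.const_mul _) (J2.const_mul _),
    MeasureTheory.integral_const_mul, MeasureTheory.integral_const_mul,
    MeasureTheory.integral_const_mul, I1, I2, I3, hB, gγ,
    gα, gβ, gα1, gβ1]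
  have nA : Real.Gamma (α - 2) ≠ 0 := hA.ne'
  have nB2 : Real.Gamma (β - 2) ≠ 0 := hB2.ne'
  have nC : Real.Gamma (α + β - 2) ≠ 0 := hC.ne'
  have n1 : α - 2 ≠ 0 := by linarith
  have n2 : β - 2 ≠ 0 := by linarith
  have n3 : α + β - 2 ≠ 0 := by linarith
  have n4 : α + β - 1 ≠ 0 := by linarith
  have n5 : α - 1 ≠ 0 := by linarith
  have n6 : β - 1 ≠ 0 := by linarith
  have n7 : ah - al ≠ 0 := hK.ne'
  rw [smul_eq_mul]
  field_simp
  ring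
end
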